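/- arXiv:1105.1473 — 5 statements merged into one kernel-verified Lean document; each statement's English description precedes it below -/
import Mathlib

section
/- Let G be a finitely generated abelian sub-semigroup of M_n(ℂ) that is not hypercyclic, and let P, r, n_k, V be as in the triangularization of G. Then the set E = {x ∈ ℂⁿ : J_G(x) = ℂⁿ} is contained in a finite union H_1 ∪ ⋯ ∪ H_r (r ≤ n) of G-invariant proper linear subspaces of ℂⁿ, each of dimension n − 1. -/
open Filter Topology Matrix

/-- `n × n` lower triangular complex matrices whose diagonal entries are all equal. -/
def IsTn {n : ℕ} (A : Matrix (Fin n) (Fin n) ℂ) : Prop :=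
  (∀ i j : Fin n, i < j → A i j = 0) ∧ ∀ i j : Fin n, A i i = A j j

/-- `F_G`: the span of the vectors `(B - μ_B I) e_i`, `B ∈ G`, `1 ≤ i ≤ n-1`. -/
noncomputable def FG {n : ℕ} (G : Set (Matrix (Fin n) (Fin n) ℂ)) : Submodule ℂ (Fin n → ℂ) :=
  Submodule.span ℂ {v | ∃ B ∈ G, ∃ i : Fin n, (i : ℕ) < n - 1 ∧
    v = (B - B i i • (1 : Matrix (Fin n) (Fin n) ℂ)).mulVec (Pi.single i 1)}

/-- The sub-semigroup generated by matrices `A 1, …, A p`. -/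
def genSG {n p : ℕ} (A : Fin p → Matrix (Fin n) (Fin n) ℂ) :
    Set (Matrix (Fin n) (Fin n) ℂ) :=
  {B | ∃ k : Fin p → ℕ, 0 < ∑ j, k j ∧ B = (List.ofFn fun j => A j ^ k j).prod}

/-- The extended limit set `J_G(x)` for the semigroup generated by `A 1, …, A p`. -/
def JSet {n p : ℕ} (A : Fin p → Matrix (Fin n) (Fin n) ℂ) (x : Fin n → ℂ) :
    Set (Fin n → ℂ) :=
  {y | ∃ (xs : ℕ → Fin n → ℂ) (k : ℕ → Fin p → ℕ),
    Tendsto (fun m => ∑ j, k m j) atTop atTop ∧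
    Tendsto xs atTop (𝓝 x) ∧
    Tendsto (fun m => ((List.ofFn fun j => A j ^ k m j).prod).mulVec (xs m)) atTop (𝓝 y)}

section helpers

variable {n : ℕ}

local notation "Mat" => Matrix (Fin n) (Fin n) ℂ

lemma prodFn_one {p : ℕ} (A : Fin p → Mat) (k : Fin p → ℕ) (hk : ∀ j, k j = 0) :
    (List.ofFn fun j => A j ^ k j).prod = 1 := by
  apply List.prod_eq_one
  intro x hx
  rw [List.mem_ofFn] at hx
  obtain ⟨i, rfl⟩ := hx
  show A i ^ k i = 1
  rw [hk i, pow_zero]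

lemma prodFn_mul {p : ℕ} (A : Fin p → Mat) (hcomm : ∀ i j, A i * A j = A j * A i)
    (k l : Fin p → ℕ) :
    (List.ofFn fun j => A j ^ k j).prod * (List.ofFn fun j => A j ^ l j).prod
      = (List.ofFn fun j => A j ^ (k j + l j)).prod := by
  induction p with
  | zero => simp
  | succ q ih =>
    have hR : Commute (A 0 ^ l 0) ((List.ofFn fun j : Fin q => A j.succ ^ k j.succ).prod) := by
      apply Commute.list_prod_right
      intro x hx
      rw [List.mem_ofFn] at hx
      obtain ⟨i, rfl⟩ := hx
      exact Commute.pow_pow (hcomm 0 i.succ) _ _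
    have ihs := ih (fun j => A j.succ) (fun i j => hcomm _ _) (fun j => k j.succ) (fun j => l j.succ)
    rw [List.ofFn_succ, List.ofFn_succ, List.ofFn_succ, List.prod_cons, List.prod_cons,
      List.prod_cons]
    calc A 0 ^ k 0 * (List.ofFn fun j : Fin q => A j.succ ^ k j.succ).prod *
          (A 0 ^ l 0 * (List.ofFn fun j : Fin q => A j.succ ^ l j.succ).prod)
        = A 0 ^ k 0 * ((List.ofFn fun j : Fin q => A j.succ ^ k j.succ).prod * A 0 ^ l 0) *
          (List.ofFn fun j : Fin q => A j.succ ^ l j.succ).prod := by simp only [mul_assoc]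
      _ = A 0 ^ k 0 * (A 0 ^ l 0 * (List.ofFn fun j : Fin q => A j.succ ^ k j.succ).prod) *
          (List.ofFn fun j : Fin q => A j.succ ^ l j.succ).prod := by rw [hR.eq]
      _ = (A 0 ^ k 0 * A 0 ^ l 0) * ((List.ofFn fun j : Fin q => A j.succ ^ k j.succ).prod *
          (List.ofFn fun j : Fin q => A j.succ ^ l j.succ).prod) := by
            rw [mul_assoc, mul_assoc, mul_assoc]
      _ = A 0 ^ (k 0 + l 0) * (List.ofFn fun j : Fin q => A j.succ ^ (k j.succ + l j.succ)).prod := by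
            rw [pow_add, ihs]

lemma prodFn_single {p : ℕ} (A : Fin p → Mat) (j : Fin p) (m : ℕ) :
    (List.ofFn fun i => A i ^ (if i = j then m else 0)).prod = A j ^ m := by
  induction p with
  | zero => exact absurd j.2 (by simp)
  | succ q ih =>
    rw [List.ofFn_succ, List.prod_cons]
    rcases Fin.eq_zero_or_eq_succ j with hj | ⟨j', rfl⟩
    · subst hj
      rw [if_pos rfl]
      rw [show (List.ofFn fun i : Fin q => A i.succ ^ (if i.succ = (0:Fin (q+1)) then m else 0)) =
          List.ofFn fun i : Fin q => A i.succ ^ (0:ℕ) by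
            apply congrArg; funext i; simp [Fin.succ_ne_zero]]
      rw [prodFn_one (fun i : Fin q => A i.succ) (fun _ => 0) (fun _ => rfl), mul_one]
    · have h0 : (if (0 : Fin (q+1)) = j'.succ then m else 0) = 0 := by
        simp [(Fin.succ_ne_zero j').symm, Fin.ne_of_lt]
      rw [h0, pow_zero, one_mul]
      have := ih (fun i => A i.succ) j'
      rw [show (List.ofFn fun i : Fin q => A i.succ ^ (if i.succ = j'.succ then m else 0)) =
          List.ofFn fun i : Fin q => A i.succ ^ (if i = j' then m else 0) by
            apply congrArg; funext i; simp only [Fin.succ_inj]]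
      exact this

lemma genSG_mul {p : ℕ} {A : Fin p → Mat} (hcomm : ∀ i j, A i * A j = A j * A i)
    {B C : Mat} (hB : B ∈ genSG A) (hC : C ∈ genSG A) : B * C ∈ genSG A := by
  obtain ⟨k, hk, rfl⟩ := hB
  obtain ⟨l, hl, rfl⟩ := hC
  refine ⟨fun j => k j + l j, by rw [Finset.sum_add_distrib]; omega, ?_⟩
  rw [← prodFn_mul A hcomm k l]

lemma genSG_gen {p : ℕ} (A : Fin p → Mat) (j : Fin p) : A j ∈ genSG A := by
  refine ⟨fun i => if i = j then 1 else 0, ?_, ?_⟩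
  · rw [Finset.sum_ite_eq' Finset.univ j (fun _ => 1)]; simp
  · rw [prodFn_single A j 1, pow_one]

lemma genSG_commute {p : ℕ} {A : Fin p → Mat} (hcomm : ∀ i j, A i * A j = A j * A i)
    {B C : Mat} (hB : B ∈ genSG A) (hC : C ∈ genSG A) : B * C = C * B := by
  obtain ⟨k, _, rfl⟩ := hB
  obtain ⟨l, _, rfl⟩ := hC
  rw [prodFn_mul A hcomm, prodFn_mul A hcomm]
  apply congrArg
  apply congrArg; funext j; rw [Nat.add_comm]

end helpers

section helpers2

variable {n : ℕ}

local notation "Mat" => Matrix (Fin n) (Fin n) ℂ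

lemma func_pow (X : Mat) (φ : (Fin n → ℂ) →ₗ[ℂ] ℂ) (d : ℂ)
    (h : ∀ v, φ (X.mulVec v) = d * φ v) (m : ℕ) (v : Fin n → ℂ) :
    φ ((X ^ m).mulVec v) = d ^ m * φ v := by
  induction m generalizing v with
  | zero => simp
  | succ q ih =>
    rw [pow_succ, ← Matrix.mulVec_mulVec, ih (X.mulVec v), h v, pow_succ]
    ring

lemma func_prodFn {p : ℕ} (A : Fin p → Mat) (φ : (Fin n → ℂ) →ₗ[ℂ] ℂ) (c : Fin p → ℂ)
    (h : ∀ j v, φ ((A j).mulVec v) = c j * φ v) (k : Fin p → ℕ) (v : Fin n → ℂ) :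
    φ (((List.ofFn fun j => A j ^ k j).prod).mulVec v) = (∏ j, c j ^ k j) * φ v := by
  induction p with
  | zero => simp
  | succ q ih =>
    rw [List.ofFn_succ, List.prod_cons, ← Matrix.mulVec_mulVec]
    rw [func_pow (A 0) φ (c 0) (h 0) (k 0)]
    rw [ih (fun j => A j.succ) (fun j => c j.succ) (fun j v => h j.succ v) (fun j => k j.succ)]
    rw [Fin.prod_univ_succ]
    ring

lemma exists_common_eigenvector (d : ℕ) :
    ∀ (V : Type) [AddCommGroup V] [Module ℂ V] [FiniteDimensional ℂ V] [Nontrivial V],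
    Module.finrank ℂ V ≤ d →
    ∀ {p : ℕ} (f : Fin p → Module.End ℂ V),
    (∀ i j, f i * f j = f j * f i) →
    ∃ v : V, v ≠ 0 ∧ ∀ i, ∃ c : ℂ, f i v = c • v := by
  induction d with
  | zero =>
    intro V _ _ _ _ hd p f hf
    exact absurd (Nat.lt_of_lt_of_le Module.finrank_pos hd) (by omega)
  | succ q ih =>
    intro V _ _ _ _ hd p f hf
    by_cases hall : ∀ i : Fin p, ∀ μ : ℂ, (f i).eigenspace μ ≠ ⊥ → (f i).eigenspace μ = ⊤
    · obtain ⟨v, hv⟩ := exists_ne (0 : V)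
      refine ⟨v, hv, fun i => ?_⟩
      obtain ⟨μ, hμ⟩ := Module.End.exists_eigenvalue (f i)
      have := hall i μ (Module.End.hasEigenvalue_iff.mp hμ)
      have hv' : v ∈ (f i).eigenspace μ := this ▸ Submodule.mem_top
      exact ⟨μ, Module.End.mem_eigenspace_iff.mp hv'⟩
    · push_neg at hall
      obtain ⟨i₀, μ, hne, hnt⟩ := hall
      set W := (f i₀).eigenspace μ with hW
      have hWnt : Nontrivial W := Submodule.nontrivial_iff_ne_bot.mpr hne
      have hWlt : W < ⊤ := lt_top_iff_ne_top.mpr hnt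
      have hWfr : Module.finrank ℂ W ≤ q := by
        have := Submodule.finrank_lt (K := ℂ) (V := V) hWlt.ne
        omega
      have hinv : ∀ j : Fin p, ∀ x ∈ W, f j x ∈ W := by
        intro j x hx
        rw [hW, Module.End.mem_eigenspace_iff] at hx ⊢
        have : f i₀ (f j x) = f j (f i₀ x) := by
          have := hf i₀ j
          calc f i₀ (f j x) = (f i₀ * f j) x := rfl
            _ = (f j * f i₀) x := by rw [this]
            _ = f j (f i₀ x) := rfl
        rw [this, hx, LinearMap.map_smul]
      set g : Fin p → Module.End ℂ W := fun j => (f j).restrict (hinv j) with hg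
      have hgc : ∀ i j, g i * g j = g j * g i := by
        intro i j
        apply LinearMap.ext
        intro w
        apply Subtype.ext
        have h1 : ((g i * g j) w : V) = f i (f j (w : V)) := by
          show (((f i).restrict (hinv i)) (((f j).restrict (hinv j)) w) : V) = _
          simp only [LinearMap.restrict_apply]
        have h2 : ((g j * g i) w : V) = f j (f i (w : V)) := by
          show (((f j).restrict (hinv j)) (((f i).restrict (hinv i)) w) : V) = _
          simp only [LinearMap.restrict_apply]
        rw [h1, h2]
        calc f i (f j (w:V)) = (f i * f j) (w:V) := rfl
          _ = (f j * f i) (w:V) := by rw [hf i j]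
          _ = f j (f i (w:V)) := rfl
      obtain ⟨w, hw0, hwc⟩ := ih W hWfr g hgc
      refine ⟨(w : V), by simpa using hw0, fun i => ?_⟩
      obtain ⟨c, hc⟩ := hwc i
      refine ⟨c, ?_⟩
      have := congrArg (Submodule.subtype W) hc
      exact this

end helpers2

section helpers3

variable {n r : ℕ} {nn : Fin r → ℕ}

lemma fin_lt_of_ne {m : ℕ} (h0 : 0 < m) (i : Fin m) (hne : i ≠ ⟨0, h0⟩) : (⟨0, h0⟩ : Fin m) < i := by
  rw [Fin.lt_def]
  simp only []
  have : i.val ≠ 0 := fun hz => hne (by apply Fin.ext; simpa using hz)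
  omega

lemma blockTri_row (b : (k : Fin r) → Matrix (Fin (nn k)) (Fin (nn k)) ℂ)
    (hTn : ∀ k, IsTn (b k)) (k : Fin r) (h0 : 0 < nn k)
    (w : ((k : Fin r) × Fin (nn k)) → ℂ) :
    ∑ a : (k : Fin r) × Fin (nn k), blockDiagonal' b ⟨k, ⟨0, h0⟩⟩ a * w a
      = b k ⟨0, h0⟩ ⟨0, h0⟩ * w ⟨k, ⟨0, h0⟩⟩ := by
  rw [← Finset.univ_sigma_univ, Finset.sum_sigma]
  rw [Finset.sum_eq_single k]
  · rw [Finset.sum_eq_single (⟨0, h0⟩ : Fin (nn k))]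
    · rw [Matrix.blockDiagonal'_apply_eq]
    · intro i _ hne
      rw [Matrix.blockDiagonal'_apply_eq, (hTn k).1 ⟨0, h0⟩ i (fin_lt_of_ne h0 i hne), zero_mul]
    · intro h; exact absurd (Finset.mem_univ _) h
  · intro k' _ hne
    apply Finset.sum_eq_zero
    intro i _
    rw [Matrix.blockDiagonal'_apply_ne _ _ _ (Ne.symm hne), zero_mul]
  · intro h; exact absurd (Finset.mem_univ _) h

lemma blockTri_col (b : (k : Fin r) → Matrix (Fin (nn k)) (Fin (nn k)) ℂ)
    (hTn : ∀ k, IsTn (b k)) (k₀ : Fin r) (i₀ : Fin (nn k₀))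
    (ψ : ((k : Fin r) × Fin (nn k)) → ℂ)
    (hmax : ∀ i : Fin (nn k₀), i₀ < i → ψ ⟨k₀, i⟩ = 0) :
    ∑ a : (k : Fin r) × Fin (nn k), blockDiagonal' b a ⟨k₀, i₀⟩ * ψ a
      = b k₀ i₀ i₀ * ψ ⟨k₀, i₀⟩ := by
  rw [← Finset.univ_sigma_univ, Finset.sum_sigma]
  rw [Finset.sum_eq_single k₀]
  · rw [Finset.sum_eq_single i₀]
    · rw [Matrix.blockDiagonal'_apply_eq]
    · intro i _ hne
      rcases lt_or_gt_of_ne hne with hlt | hgt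
      · rw [Matrix.blockDiagonal'_apply_eq, (hTn k₀).1 i i₀ hlt, zero_mul]
      · rw [hmax i hgt, mul_zero]
    · intro h; exact absurd (Finset.mem_univ _) h
  · intro k' _ hne
    apply Finset.sum_eq_zero
    intro i _
    rw [Matrix.blockDiagonal'_apply_ne _ _ _ hne, zero_mul]
  · intro h; exact absurd (Finset.mem_univ _) h

/-- conjugation identity -/
lemma conj_eq_submatrix (P : (Matrix (Fin n) (Fin n) ℂ)ˣ)
    (e : Fin n ≃ ((k : Fin r) × Fin (nn k)))
    (X : Matrix (Fin n) (Fin n) ℂ) (Y : Matrix ((k : Fin r) × Fin (nn k)) ((k : Fin r) × Fin (nn k)) ℂ)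
    (h : ((↑P⁻¹ : Matrix (Fin n) (Fin n) ℂ) * X * (↑P : Matrix (Fin n) (Fin n) ℂ)).submatrix e.symm e.symm = Y) :
    (↑P⁻¹ : Matrix (Fin n) (Fin n) ℂ) * X * (↑P : Matrix (Fin n) (Fin n) ℂ) = Y.submatrix e e := by
  have h2 := congrArg (fun M : Matrix ((k : Fin r) × Fin (nn k)) ((k : Fin r) × Fin (nn k)) ℂ =>
    M.submatrix (⇑e) (⇑e)) h
  simp only [Matrix.submatrix_submatrix, Equiv.symm_comp_self, Matrix.submatrix_id_id] at h2
  exact h2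



noncomputable def chiF (hpos : ∀ k, 0 < nn k)
    (e : Fin n ≃ ((k : Fin r) × Fin (nn k))) (P : (Matrix (Fin n) (Fin n) ℂ)ˣ) (k : Fin r) :
    (Fin n → ℂ) →ₗ[ℂ] ℂ :=
  (LinearMap.proj (e.symm ⟨k, ⟨0, hpos k⟩⟩)).comp
    (Matrix.mulVecLin (↑P⁻¹ : Matrix (Fin n) (Fin n) ℂ))

lemma chiF_apply (hpos : ∀ k, 0 < nn k)
    (e : Fin n ≃ ((k : Fin r) × Fin (nn k))) (P : (Matrix (Fin n) (Fin n) ℂ)ˣ) (k : Fin r)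
    (v : Fin n → ℂ) :
    chiF hpos e P k v = ((↑P⁻¹ : Matrix (Fin n) (Fin n) ℂ) *ᵥ v) (e.symm ⟨k, ⟨0, hpos k⟩⟩) := rfl

lemma chi_step (hpos : ∀ k, 0 < nn k)
    (e : Fin n ≃ ((k : Fin r) × Fin (nn k))) (P : (Matrix (Fin n) (Fin n) ℂ)ˣ)
    (X : Matrix (Fin n) (Fin n) ℂ)
    (b : (k : Fin r) → Matrix (Fin (nn k)) (Fin (nn k)) ℂ)
    (hTn : ∀ k, IsTn (b k))
    (hconj : ((↑P⁻¹ : Matrix (Fin n) (Fin n) ℂ) * X * (↑P : Matrix (Fin n) (Fin n) ℂ)).submatrix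
        e.symm e.symm = blockDiagonal' b)
    (k : Fin r) (v : Fin n → ℂ) :
    chiF hpos e P k (X *ᵥ v) = b k ⟨0, hpos k⟩ ⟨0, hpos k⟩ * chiF hpos e P k v := by
  have hsub := conj_eq_submatrix P e X (blockDiagonal' b) hconj
  have h1 : (↑P⁻¹ : Matrix (Fin n) (Fin n) ℂ) * X
      = (blockDiagonal' b).submatrix ⇑e ⇑e * (↑P⁻¹ : Matrix (Fin n) (Fin n) ℂ) := by
    calc (↑P⁻¹ : Matrix (Fin n) (Fin n) ℂ) * X
        = ((↑P⁻¹ : Matrix (Fin n) (Fin n) ℂ) * X * ↑P) * ↑P⁻¹ := by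
          rw [mul_assoc ((↑P⁻¹ : Matrix (Fin n) (Fin n) ℂ) * X)]
          rw [Units.mul_inv, mul_one]
      _ = (blockDiagonal' b).submatrix ⇑e ⇑e * (↑P⁻¹ : Matrix (Fin n) (Fin n) ℂ) := by rw [hsub]
  rw [chiF_apply, chiF_apply, Matrix.mulVec_mulVec, h1, ← Matrix.mulVec_mulVec,
    Matrix.submatrix_mulVec_equiv]
  rw [Function.comp_apply, Equiv.apply_symm_apply]
  have hexp : (blockDiagonal' b *ᵥ (((↑P⁻¹ : Matrix (Fin n) (Fin n) ℂ) *ᵥ v) ∘ ⇑e.symm))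
      (⟨k, ⟨0, hpos k⟩⟩ : (k : Fin r) × Fin (nn k))
      = ∑ a : (k : Fin r) × Fin (nn k), blockDiagonal' b ⟨k, ⟨0, hpos k⟩⟩ a *
        (((↑P⁻¹ : Matrix (Fin n) (Fin n) ℂ) *ᵥ v) ∘ ⇑e.symm) a := by
    simp [Matrix.mulVec, dotProduct]
  rw [hexp, blockTri_row b hTn k (hpos k)]
  rfl

lemma P_blockdiag_comm
    (e : Fin n ≃ ((k : Fin r) × Fin (nn k))) (P : (Matrix (Fin n) (Fin n) ℂ)ˣ)
    (X : Matrix (Fin n) (Fin n) ℂ)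
    (b : (k : Fin r) → Matrix (Fin (nn k)) (Fin (nn k)) ℂ)
    (hconj : ((↑P⁻¹ : Matrix (Fin n) (Fin n) ℂ) * X * (↑P : Matrix (Fin n) (Fin n) ℂ)).submatrix
        e.symm e.symm = blockDiagonal' b)
    (w : ((k : Fin r) × Fin (nn k)) → ℂ) :
    (↑P : Matrix (Fin n) (Fin n) ℂ) *ᵥ ((blockDiagonal' b *ᵥ w) ∘ ⇑e)
      = X *ᵥ ((↑P : Matrix (Fin n) (Fin n) ℂ) *ᵥ (w ∘ ⇑e)) := by
  have hsub := conj_eq_submatrix P e X (blockDiagonal' b) hconj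
  have hXP : X * (↑P : Matrix (Fin n) (Fin n) ℂ)
      = (↑P : Matrix (Fin n) (Fin n) ℂ) * ((blockDiagonal' b).submatrix ⇑e ⇑e) := by
    calc X * (↑P : Matrix (Fin n) (Fin n) ℂ)
        = ((↑P : Matrix (Fin n) (Fin n) ℂ) * ↑P⁻¹) * X * ↑P := by rw [Units.mul_inv, one_mul]
      _ = (↑P : Matrix (Fin n) (Fin n) ℂ) * ((↑P⁻¹ : Matrix (Fin n) (Fin n) ℂ) * X * ↑P) := by
          rw [mul_assoc, mul_assoc, mul_assoc]
      _ = (↑P : Matrix (Fin n) (Fin n) ℂ) * ((blockDiagonal' b).submatrix ⇑e ⇑e) := by rw [hsub]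
  have hcw : ((blockDiagonal' b).submatrix ⇑e ⇑e) *ᵥ (w ∘ ⇑e) = (blockDiagonal' b *ᵥ w) ∘ ⇑e := by
    rw [Matrix.submatrix_mulVec_equiv]
    have : (w ∘ ⇑e) ∘ ⇑e.symm = w := by funext a; simp
    rw [this]
  rw [← hcw, Matrix.mulVec_mulVec, Matrix.mulVec_mulVec, hXP]

end helpers3


section funcbound

lemma func_expand {ι : Type} [Fintype ι] [DecidableEq ι] (τ : (ι → ℂ) →ₗ[ℂ] ℂ) (z : ι → ℂ) :
    τ z = ∑ k, z k * τ (Pi.single k 1) := by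
  conv_lhs => rw [← Finset.univ_sum_single z]
  rw [map_sum]
  apply Finset.sum_congr rfl
  intro k _
  have h1 : Pi.single k (z k) = z k • (Pi.single k 1 : ι → ℂ) := by
    funext b; by_cases hb : b = k <;> simp [Pi.single_apply, hb]
  rw [h1, LinearMap.map_smul, smul_eq_mul]

lemma func_bound {ι : Type} [Fintype ι] [DecidableEq ι]
    (τ : (ι → ℂ) →ₗ[ℂ] ℂ) (z : ι → ℂ) :
    ‖τ z‖ ≤ (∑ k, ‖τ (Pi.single k 1)‖) * ‖z‖ := by
  rw [func_expand]
  calc ‖∑ k, z k * τ (Pi.single k 1)‖ ≤ ∑ k, ‖z k * τ (Pi.single k 1)‖ :=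
        norm_sum_le _ _
    _ ≤ ∑ k, ‖τ (Pi.single k 1)‖ * ‖z‖ := by
        apply Finset.sum_le_sum
        intro k _
        rw [norm_mul, mul_comm]
        exact mul_le_mul_of_nonneg_left (norm_le_pi_norm z k) (norm_nonneg _)
    _ = (∑ k, ‖τ (Pi.single k 1)‖) * ‖z‖ := (Finset.sum_mul _ _ _).symm

end funcbound


section algebra

variable {n p : ℕ}

local notation "Mat" => Matrix (Fin n) (Fin n) ℂ
local notation "Vec" => (Fin n → ℂ)

/-- evaluation at x, linear in the matrix -/
noncomputable def evxMap (x : Vec) : Mat →ₗ[ℂ] Vec where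
  toFun S := S.mulVec x
  map_add' S T := Matrix.add_mulVec S T x
  map_smul' a S := Matrix.smul_mulVec a S x

@[simp] lemma evxMap_apply (x : Vec) (S : Mat) : evxMap x S = S.mulVec x := rfl

/-- span of the unital semigroup -/
noncomputable def AlgSpan (A : Fin p → Mat) : Submodule ℂ Mat :=
  Submodule.span ℂ (insert (1 : Mat) (genSG A))

noncomputable def Morb (A : Fin p → Mat) (x : Vec) : Submodule ℂ Vec :=
  (AlgSpan A).map (evxMap x)

lemma one_mem_AlgSpan (A : Fin p → Mat) : (1 : Mat) ∈ AlgSpan A :=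
  Submodule.subset_span (Set.mem_insert 1 _)

lemma genSG_subset_AlgSpan (A : Fin p → Mat) {B : Mat} (hB : B ∈ genSG A) : B ∈ AlgSpan A :=
  Submodule.subset_span (Set.mem_insert_of_mem 1 hB)

lemma x_mem_Morb (A : Fin p → Mat) (x : Vec) : x ∈ Morb A x :=
  ⟨1, one_mem_AlgSpan A, Matrix.one_mulVec x⟩

lemma mul_mem_AlgSpan {A : Fin p → Mat} (hcomm : ∀ i j, A i * A j = A j * A i)
    {B : Mat} (hB : B ∈ genSG A) {S : Mat} (hS : S ∈ AlgSpan A) : B * S ∈ AlgSpan A := by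
  induction hS using Submodule.span_induction with
  | mem s hs =>
    rcases hs with rfl | hs
    · rw [mul_one]; exact genSG_subset_AlgSpan A hB
    · exact genSG_subset_AlgSpan A (genSG_mul hcomm hB hs)
  | zero => rw [mul_zero]; exact Submodule.zero_mem _
  | add y z hy hz ihy ihz => rw [mul_add]; exact Submodule.add_mem _ ihy ihz
  | smul a y hy ihy => rw [Matrix.mul_smul]; exact Submodule.smul_mem _ a ihy

lemma commute_AlgSpan {A : Fin p → Mat} (hcomm : ∀ i j, A i * A j = A j * A i)
    {S : Mat} (hS : S ∈ AlgSpan A) {T : Mat} (hT : T ∈ AlgSpan A) : S * T = T * S := by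
  have hgen : ∀ s ∈ insert (1 : Mat) (genSG A), ∀ T' ∈ AlgSpan A, s * T' = T' * s := by
    intro s hs T' hT'
    induction hT' using Submodule.span_induction with
    | mem t ht =>
      rcases hs with rfl | hs
      · rw [one_mul, mul_one]
      · rcases ht with rfl | ht
        · rw [one_mul, mul_one]
        · exact genSG_commute hcomm hs ht
    | zero => rw [mul_zero, zero_mul]
    | add y z hy hz ihy ihz => rw [mul_add, add_mul, ihy, ihz]
    | smul a y hy ihy => rw [Matrix.mul_smul, Matrix.smul_mul, ihy]
  induction hS using Submodule.span_induction with
  | mem s hs => exact hgen s hs T hT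
  | zero => rw [zero_mul, mul_zero]
  | add y z hy hz ihy ihz => rw [add_mul, mul_add, ihy, ihz]
  | smul a y hy ihy => rw [Matrix.smul_mul, Matrix.mul_smul, ihy]

lemma Morb_invariant {A : Fin p → Mat} (hcomm : ∀ i j, A i * A j = A j * A i)
    {B : Mat} (hB : B ∈ genSG A) (x : Vec) {v : Vec} (hv : v ∈ Morb A x) :
    B.mulVec v ∈ Morb A x := by
  obtain ⟨S, hS, rfl⟩ := hv
  refine ⟨B * S, mul_mem_AlgSpan hcomm hB hS, ?_⟩
  simp [Matrix.mulVec_mulVec]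

set_option maxHeartbeats 1600000 in
/-- Case `Morb = ⊤`: the orbit of `x` itself is dense. -/
lemma case_top {A : Fin p → Mat} (hcomm : ∀ i j, A i * A j = A j * A i)
    {x : Vec} (hM : Morb A x = ⊤) (hJ : JSet A x = Set.univ) :
    Dense {w : Vec | ∃ B ∈ genSG A, w = B.mulVec x} := by
  classical
  set L : AlgSpan A →ₗ[ℂ] Vec := (evxMap x).comp (AlgSpan A).subtype with hL
  have hLapp : ∀ S : AlgSpan A, L S = (S : Mat).mulVec x := fun _ => rfl
  have hinj : Function.Injective L := by
    rw [← LinearMap.ker_eq_bot]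
    rw [Submodule.eq_bot_iff]
    rintro ⟨S, hS⟩ h0
    have hS0 : S.mulVec x = 0 := h0
    have hzero : ∀ v : Vec, S.mulVec v = 0 := by
      intro v
      have hv : v ∈ Morb A x := hM ▸ Submodule.mem_top
      obtain ⟨T, hT, rfl⟩ := hv
      show S.mulVec (T.mulVec x) = 0
      rw [Matrix.mulVec_mulVec, commute_AlgSpan hcomm hS hT, ← Matrix.mulVec_mulVec, hS0,
        Matrix.mulVec_zero]
    have : S = 0 := by
      ext i j
      have h := congrFun (hzero (Pi.single j 1)) i
      simp only [Matrix.mulVec_single, mul_one, Pi.zero_apply] at h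
      simpa using h
    exact Subtype.ext this
  have hsurj : Function.Surjective L := by
    intro v
    have hv : v ∈ Morb A x := hM ▸ Submodule.mem_top
    obtain ⟨T, hT, rfl⟩ := hv
    exact ⟨⟨T, hT⟩, rfl⟩
  set EL : AlgSpan A ≃ₗ[ℂ] Vec := LinearEquiv.ofBijective L ⟨hinj, hsurj⟩ with hEL
  set T : Vec ≃ₗ[ℂ] AlgSpan A := EL.symm with hT
  -- entrywise bound
  set τ : Fin n → Fin n → (Vec →ₗ[ℂ] ℂ) := fun i j =>
    { toFun := fun z => ((T z : AlgSpan A) : Mat) i j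
      map_add' := by
        intro a b
        show ((T (a + b) : AlgSpan A) : Mat) i j
          = ((T a : AlgSpan A) : Mat) i j + ((T b : AlgSpan A) : Mat) i j
        rw [map_add]
        rfl
      map_smul' := by
        intro a b
        show ((T (a • b) : AlgSpan A) : Mat) i j = a • ((T b : AlgSpan A) : Mat) i j
        rw [_root_.map_smul]
        rfl } with hτ
  have hτval : ∀ (i j : Fin n) (z : Vec), τ i j z = ((T z : AlgSpan A) : Mat) i j :=
    fun _ _ _ => rfl
  set C : ℝ := (∑ i, ∑ j, ∑ k, ‖τ i j (Pi.single k 1)‖) + 1 with hC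
  have hC0 : 0 < C := by
    rw [hC]
    positivity
  have hbound : ∀ z v : Vec, ‖((T z : AlgSpan A) : Mat).mulVec v‖ ≤ C * ‖z‖ * ‖v‖ := by
    intro z v
    have hCz : (0:ℝ) ≤ C * ‖z‖ * ‖v‖ := by positivity
    rw [pi_norm_le_iff_of_nonneg hCz]
    intro i
    have hrow : ((T z : AlgSpan A) : Mat).mulVec v i = ∑ j, τ i j z * v j := by
      simp [Matrix.mulVec, dotProduct, hτval]
    rw [hrow]
    calc ‖∑ j, τ i j z * v j‖ ≤ ∑ j, ‖τ i j z * v j‖ := norm_sum_le _ _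
      _ ≤ ∑ j, ((∑ k, ‖τ i j (Pi.single k 1)‖) * ‖z‖) * ‖v‖ := by
          apply Finset.sum_le_sum
          intro j _
          rw [norm_mul]
          have h1 : ‖τ i j z‖ ≤ (∑ k, ‖τ i j (Pi.single k 1)‖) * ‖z‖ := func_bound _ _
          have h2 : ‖v j‖ ≤ ‖v‖ := norm_le_pi_norm v j
          have h3 : (0:ℝ) ≤ ‖τ i j z‖ := norm_nonneg _
          have h4 : (0:ℝ) ≤ ‖v‖ := norm_nonneg _
          nlinarith
      _ = ((∑ j, ∑ k, ‖τ i j (Pi.single k 1)‖) * ‖z‖) * ‖v‖ := by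
          rw [← Finset.sum_mul, ← Finset.sum_mul]
      _ ≤ C * ‖z‖ * ‖v‖ := by
          have hle : (∑ j, ∑ k, ‖τ i j (Pi.single k 1)‖) ≤ C := by
            rw [hC]
            have := Finset.single_le_sum
              (f := fun i' => ∑ j, ∑ k, ‖τ i' j (Pi.single k 1)‖)
              (fun i' _ => by positivity) (Finset.mem_univ i)
            linarith
          have hz : (0:ℝ) ≤ ‖z‖ := norm_nonneg z
          have hv : (0:ℝ) ≤ ‖v‖ := norm_nonneg v
          nlinarith
  have hTx : ∀ z : Vec, ((T z : AlgSpan A) : Mat).mulVec x = z := by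
    intro z
    have := EL.apply_symm_apply z
    exact this
  -- density
  intro y
  have hy : y ∈ JSet A x := by rw [hJ]; trivial
  obtain ⟨xs, kk, hsum, hxs, hlim⟩ := hy
  set Bm : ℕ → Mat := fun m => (List.ofFn fun j => A j ^ kk m j).prod with hBm
  have hBmA : ∀ m, Bm m ∈ AlgSpan A := by
    intro m
    by_cases hpos : 0 < ∑ j, kk m j
    · exact genSG_subset_AlgSpan A ⟨kk m, hpos, rfl⟩
    · have hz : ∀ j, kk m j = 0 := by
        intro j
        have : ∑ j, kk m j = 0 := by omega
        exact Finset.sum_eq_zero_iff.mp this j (Finset.mem_univ j)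
      rw [hBm]
      simp only []
      rw [prodFn_one A (kk m) hz]
      exact one_mem_AlgSpan A
  set wm : ℕ → Vec := fun m => (Bm m).mulVec x with hwm
  have hTw : ∀ m, ((T (wm m) : AlgSpan A) : Mat) = Bm m := by
    intro m
    have h1 : EL ⟨Bm m, hBmA m⟩ = wm m := by
      rfl
    have h2 : T (wm m) = ⟨Bm m, hBmA m⟩ := by
      rw [hT, ← h1, LinearEquiv.symm_apply_apply]
    rw [h2]
  set em : ℕ → ℝ := fun m => ‖x - xs m‖ with hem'
  have hem : Tendsto em atTop (𝓝 0) := by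
    have h1 : Tendsto (fun m => xs m - x) atTop (𝓝 0) := tendsto_sub_nhds_zero_iff.mpr hxs
    have h2 := h1.norm
    rw [norm_zero] at h2
    have : em = fun m => ‖xs m - x‖ := by funext m; rw [hem', norm_sub_rev]
    rw [this]
    exact h2
  set dm : ℕ → ℝ := fun m => ‖(Bm m).mulVec (xs m) - y‖ with hdm'
  have hdm : Tendsto dm atTop (𝓝 0) := by
    have h1 : Tendsto (fun m => (Bm m).mulVec (xs m) - y) atTop (𝓝 0) :=
      tendsto_sub_nhds_zero_iff.mpr hlim
    have h2 := h1.norm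
    rwa [norm_zero] at h2
  set am : ℕ → ℝ := fun m => ‖(Bm m).mulVec (xs m)‖ with ham'
  have ham : Tendsto am atTop (𝓝 ‖y‖) := hlim.norm
  have hkey : ∀ m, ‖(Bm m).mulVec (x - xs m)‖ ≤ C * ‖wm m‖ * em m := by
    intro m
    have := hbound (wm m) (x - xs m)
    rwa [hTw m] at this
  have hsplit : ∀ m, wm m = (Bm m).mulVec (xs m) + (Bm m).mulVec (x - xs m) := by
    intro m
    rw [hwm]
    simp only []
    rw [← Matrix.mulVec_add]
    congr 1
    rw [add_comm, sub_add_cancel]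
  have hevB : ∀ᶠ m in atTop, wm m ∈ {w : Vec | ∃ B ∈ genSG A, w = B.mulVec x} := by
    have := hsum.eventually_gt_atTop 0
    exact this.mono fun m h => ⟨Bm m, ⟨kk m, h, rfl⟩, rfl⟩
  have hev1 : ∀ᶠ m in atTop, C * em m ≤ 1/2 := by
    have h1 : Tendsto (fun m => C * em m) atTop (𝓝 0) := by
      have := hem.const_mul C
      rwa [mul_zero] at this
    exact (h1.eventually_lt_const (by norm_num : (0:ℝ) < 1/2)).mono fun m h => le_of_lt h
  have hev2 : ∀ᶠ m in atTop, am m ≤ ‖y‖ + 1 := by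
    exact (ham.eventually_lt_const (by linarith [norm_nonneg y] : ‖y‖ < ‖y‖ + 1)).mono
      fun m h => le_of_lt h
  have ham0 : ∀ m, ‖(Bm m).mulVec (xs m)‖ = am m := fun m => rfl
  have hdm0 : ∀ m, ‖(Bm m).mulVec (xs m) - y‖ = dm m := fun m => rfl
  have hem0' : ∀ m, ‖x - xs m‖ = em m := fun m => rfl
  clear_value T EL L τ C Bm wm em dm am
  have hfinal : ∀ᶠ m in atTop, ‖wm m - y‖ ≤ dm m + C * (2*(‖y‖+1)) * em m := by
    filter_upwards [hev1, hev2] with m h1 h2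
    have hem0 : (0:ℝ) ≤ em m := by rw [← hem0' m]; exact norm_nonneg _
    have hwm0 : (0:ℝ) ≤ ‖wm m‖ := norm_nonneg _
    have hb1 : ‖(Bm m).mulVec (x - xs m)‖ ≤ C * ‖wm m‖ * em m := hkey m
    have hw2 : ‖wm m‖ ≤ am m + C * ‖wm m‖ * em m := by
      calc ‖wm m‖ = ‖(Bm m).mulVec (xs m) + (Bm m).mulVec (x - xs m)‖ := by rw [← hsplit]
        _ ≤ ‖(Bm m).mulVec (xs m)‖ + ‖(Bm m).mulVec (x - xs m)‖ := norm_add_le _ _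
        _ ≤ am m + C * ‖wm m‖ * em m := by rw [ham0 m] at *; linarith
    have hCw : C * ‖wm m‖ * em m ≤ (1/2) * ‖wm m‖ := by
      have h5 : C * ‖wm m‖ * em m = (C * em m) * ‖wm m‖ := by ring
      rw [h5]
      exact mul_le_mul_of_nonneg_right h1 hwm0
    have hwbd : ‖wm m‖ ≤ 2*(‖y‖+1) := by linarith
    have hb2 : ‖(Bm m).mulVec (x - xs m)‖ ≤ C * (2*(‖y‖+1)) * em m := by
      calc ‖(Bm m).mulVec (x - xs m)‖ ≤ C * ‖wm m‖ * em m := hb1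
        _ ≤ C * (2*(‖y‖+1)) * em m :=
          mul_le_mul_of_nonneg_right (mul_le_mul_of_nonneg_left hwbd (le_of_lt hC0)) hem0
    calc ‖wm m - y‖ = ‖((Bm m).mulVec (xs m) - y) + (Bm m).mulVec (x - xs m)‖ := by
          rw [hsplit m, add_sub_right_comm]
      _ ≤ ‖(Bm m).mulVec (xs m) - y‖ + ‖(Bm m).mulVec (x - xs m)‖ := norm_add_le _ _
      _ ≤ dm m + C * (2*(‖y‖+1)) * em m := by rw [hdm0 m] at *; linarith
  have hg0 : Tendsto (fun m => dm m + C * (2*(‖y‖+1)) * em m) atTop (𝓝 0) := by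
    have h2 := hem.const_mul (C * (2*(‖y‖+1)))
    rw [mul_zero] at h2
    have := hdm.add h2
    rwa [add_zero] at this
  have hwy : Tendsto wm atTop (𝓝 y) := by
    rw [← tendsto_sub_nhds_zero_iff]
    exact squeeze_zero_norm' hfinal hg0
  exact mem_closure_of_tendsto hwy hevB

end algebra

section casetwo

variable {n p r : ℕ}

set_option maxHeartbeats 1600000 in
lemma case_lt {A : Fin p → Matrix (Fin n) (Fin n) ℂ}
    (hcomm : ∀ i j, A i * A j = A j * A i)
    (P : (Matrix (Fin n) (Fin n) ℂ)ˣ)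
    {nn : Fin r → ℕ} (hpos : ∀ k, 0 < nn k)
    (e : Fin n ≃ ((k : Fin r) × Fin (nn k)))
    (b : Fin p → (k : Fin r) → Matrix (Fin (nn k)) (Fin (nn k)) ℂ)
    (hTn : ∀ j k, IsTn (b j k))
    (hbj : ∀ j, ((↑P⁻¹ : Matrix (Fin n) (Fin n) ℂ) * A j *
        (↑P : Matrix (Fin n) (Fin n) ℂ)).submatrix e.symm e.symm = blockDiagonal' (b j))
    {x : Fin n → ℂ}
    (hchi : ∀ k, chiF hpos e P k x ≠ 0)
    (hM : Morb A x ≠ ⊤) (hJ : JSet A x = Set.univ) : False := by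
  classical
  have hMlt : Morb A x < ⊤ := lt_top_iff_ne_top.mpr hM
  obtain ⟨φ, hφ0, hφmap⟩ := Submodule.exists_dual_map_eq_bot_of_lt_top hMlt inferInstance
  have hφM : ∀ v ∈ Morb A x, φ v = 0 := by
    intro v hv
    have h1 : φ v ∈ (Morb A x).map φ := Submodule.mem_map_of_mem hv
    rw [hφmap] at h1
    simpa using h1
  set N : Submodule ℂ (Module.Dual ℂ (Fin n → ℂ)) := (Morb A x).dualAnnihilator with hN
  have hφN : φ ∈ N := (Submodule.mem_dualAnnihilator φ).mpr hφM
  have hNne : N ≠ ⊥ := by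
    intro hbot
    rw [hbot, Submodule.mem_bot] at hφN
    exact hφ0 hφN
  haveI : Nontrivial N := Submodule.nontrivial_iff_ne_bot.mpr hNne
  set g : Fin p → Module.End ℂ (Module.Dual ℂ (Fin n → ℂ)) :=
    fun j => (Matrix.mulVecLin (A j)).dualMap with hg
  have hgval : ∀ (j : Fin p) (ψ : Module.Dual ℂ (Fin n → ℂ)) (v : Fin n → ℂ),
      (g j ψ) v = ψ ((A j).mulVec v) := fun j ψ v => rfl
  have hgN : ∀ j : Fin p, ∀ ψ ∈ N, g j ψ ∈ N := by
    intro j ψ hψ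
    rw [hN, Submodule.mem_dualAnnihilator] at hψ ⊢
    intro w hw
    rw [hgval]
    exact hψ _ (Morb_invariant hcomm (genSG_gen A j) x hw)
  set f : Fin p → Module.End ℂ N := fun j => (g j).restrict (hgN j) with hf
  have hgc : ∀ i j, ∀ θ : Module.Dual ℂ (Fin n → ℂ), g i (g j θ) = g j (g i θ) := by
    intro i j θ
    apply LinearMap.ext
    intro v
    rw [hgval, hgval, hgval, hgval, Matrix.mulVec_mulVec, Matrix.mulVec_mulVec, hcomm]
  have hfc : ∀ i j, f i * f j = f j * f i := by
    intro i j
    apply LinearMap.ext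
    intro ψ
    apply Subtype.ext
    have h1 : (((f i * f j) ψ : N) : Module.Dual ℂ (Fin n → ℂ)) = g i (g j (ψ : Module.Dual ℂ (Fin n → ℂ))) := by
      show ((((g i).restrict (hgN i)) (((g j).restrict (hgN j)) ψ) : N) : Module.Dual ℂ (Fin n → ℂ)) = _
      simp only [LinearMap.restrict_apply]
    have h2 : (((f j * f i) ψ : N) : Module.Dual ℂ (Fin n → ℂ)) = g j (g i (ψ : Module.Dual ℂ (Fin n → ℂ))) := by
      show ((((g j).restrict (hgN j)) (((g i).restrict (hgN i)) ψ) : N) : Module.Dual ℂ (Fin n → ℂ)) = _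
      simp only [LinearMap.restrict_apply]
    rw [h1, h2, hgc i j]
  obtain ⟨φ₀, hφ₀ne, hev⟩ :=
    exists_common_eigenvector (Module.finrank ℂ N) N (le_refl _) f hfc
  choose c hc using hev
  set φ₁ : Module.Dual ℂ (Fin n → ℂ) := (φ₀ : Module.Dual ℂ (Fin n → ℂ)) with hφ₁
  have hφ₁0 : φ₁ ≠ 0 := by
    intro h
    exact hφ₀ne (by exact_mod_cast Subtype.ext h)
  have hφ₁M : ∀ v ∈ Morb A x, φ₁ v = 0 :=
    (Submodule.mem_dualAnnihilator _).mp φ₀.2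
  have heig : ∀ (j : Fin p) (v : Fin n → ℂ), φ₁ ((A j).mulVec v) = c j * φ₁ v := by
    intro j v
    have h0 := hc j
    have hL : ((f j φ₀ : N) : Module.Dual ℂ (Fin n → ℂ)) = g j φ₁ := by
      show ((((g j).restrict (hgN j)) φ₀ : N) : Module.Dual ℂ (Fin n → ℂ)) = _
      simp only [LinearMap.restrict_apply]
      rfl
    calc φ₁ ((A j).mulVec v) = (g j φ₁) v := (hgval j φ₁ v).symm
      _ = ((f j φ₀ : N) : Module.Dual ℂ (Fin n → ℂ)) v := by rw [hL]
      _ = ((c j • φ₀ : N) : Module.Dual ℂ (Fin n → ℂ)) v := by rw [h0]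
      _ = c j * φ₁ v := by
          rw [Submodule.coe_smul]
          rfl
  -- the functional on block coordinates
  set Ψ : (((k : Fin r) × Fin (nn k)) → ℂ) →ₗ[ℂ] ℂ :=
    φ₁ ∘ₗ (Matrix.mulVecLin ((↑P : Matrix (Fin n) (Fin n) ℂ))) ∘ₗ (LinearMap.funLeft ℂ ℂ ⇑e)
    with hΨ
  have hΨval : ∀ w, Ψ w = φ₁ ((↑P : Matrix (Fin n) (Fin n) ℂ) *ᵥ (w ∘ ⇑e)) := fun w => rfl
  set ψa : ((k : Fin r) × Fin (nn k)) → ℂ := fun a => Ψ (Pi.single a 1) with hψa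
  have hψa' : ∀ a, Ψ (Pi.single a 1) = ψa a := fun a => rfl
  have hΨexp : ∀ w, Ψ w = ∑ a, w a * ψa a := fun w => func_expand Ψ w
  have hΨne : ∃ a, ψa a ≠ 0 := by
    by_contra hall
    push_neg at hall
    apply hφ₁0
    apply LinearMap.ext
    intro v
    set w : ((k : Fin r) × Fin (nn k)) → ℂ :=
      fun a => ((↑P⁻¹ : Matrix (Fin n) (Fin n) ℂ) *ᵥ v) (e.symm a) with hw
    have h1 : w ∘ ⇑e = (↑P⁻¹ : Matrix (Fin n) (Fin n) ℂ) *ᵥ v := by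
      funext i
      show ((↑P⁻¹ : Matrix (Fin n) (Fin n) ℂ) *ᵥ v) (e.symm (e i)) = _
      rw [Equiv.symm_apply_apply]
    have hwv : (↑P : Matrix (Fin n) (Fin n) ℂ) *ᵥ (w ∘ ⇑e) = v := by
      rw [h1, Matrix.mulVec_mulVec, Units.mul_inv, Matrix.one_mulVec]
    have h2 := hΨexp w
    rw [hΨval, hwv] at h2
    simp only [hall, mul_zero, Finset.sum_const_zero] at h2
    simpa using h2
  obtain ⟨a₁, ha₁⟩ := hΨne
  have hSne : (Finset.univ.filter (fun i : Fin (nn a₁.1) => ψa ⟨a₁.1, i⟩ ≠ 0)).Nonempty := by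
    refine ⟨a₁.2, ?_⟩
    rw [Finset.mem_filter]
    exact ⟨Finset.mem_univ _, by rw [Sigma.eta]; exact ha₁⟩
  set k₀ : Fin r := a₁.1 with hk₀
  set i₀ : Fin (nn k₀) := (Finset.univ.filter (fun i : Fin (nn k₀) => ψa ⟨k₀, i⟩ ≠ 0)).max' hSne
    with hi₀def
  have hi₀ : ψa ⟨k₀, i₀⟩ ≠ 0 :=
    (Finset.mem_filter.mp (Finset.max'_mem _ hSne)).2
  have hmax : ∀ i, i₀ < i → ψa ⟨k₀, i⟩ = 0 := by
    intro i hi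
    by_contra hne
    exact absurd (Finset.le_max' _ i (Finset.mem_filter.mpr ⟨Finset.mem_univ _, hne⟩))
      (not_le.mpr hi)
  have hkeyj : ∀ (j : Fin p) w, Ψ ((blockDiagonal' (b j)) *ᵥ w) = c j * Ψ w := by
    intro j w
    rw [hΨval, hΨval, P_blockdiag_comm e P (A j) (b j) (hbj j) w]
    exact heig j _
  have hcj : ∀ j, c j = b j k₀ ⟨0, hpos k₀⟩ ⟨0, hpos k₀⟩ := by
    intro j
    have h1 := hkeyj j (Pi.single ⟨k₀, i₀⟩ 1)
    rw [Matrix.mulVec_single, hψa'] at h1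
    rw [hΨexp] at h1
    simp only [Pi.smul_apply, MulOpposite.op_one, one_smul, Matrix.col_apply] at h1
    rw [blockTri_col (b j) (hTn j) k₀ i₀ ψa hmax] at h1
    have h2 := mul_right_cancel₀ hi₀ h1
    rw [← h2, (hTn j k₀).2 i₀ ⟨0, hpos k₀⟩]
  have hχA : ∀ (j : Fin p) (v : Fin n → ℂ),
      chiF hpos e P k₀ ((A j).mulVec v) = c j * chiF hpos e P k₀ v := by
    intro j v
    rw [chi_step hpos e P (A j) (b j) (hTn j) (hbj j) k₀ v, hcj j]
  obtain ⟨y, hy1⟩ : ∃ y, φ₁ y = 1 := by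
    obtain ⟨v₀, hv₀⟩ : ∃ v₀, φ₁ v₀ ≠ 0 := by
      by_contra hall
      push_neg at hall
      exact hφ₁0 (LinearMap.ext fun v => by simp [hall])
    exact ⟨(φ₁ v₀)⁻¹ • v₀, by rw [LinearMap.map_smul, smul_eq_mul, inv_mul_cancel₀ hv₀]⟩
  have hyJ : y ∈ JSet A x := by rw [hJ]; trivial
  obtain ⟨xs, kk, hsum, hxs, hlim⟩ := hyJ
  set Bm : ℕ → Matrix (Fin n) (Fin n) ℂ := fun m => (List.ofFn fun j => A j ^ kk m j).prod
    with hBm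
  set lam : ℕ → ℂ := fun m => ∏ j, c j ^ kk m j with hlam
  have hφB : ∀ (m : ℕ) v, φ₁ ((Bm m).mulVec v) = lam m * φ₁ v :=
    fun m v => func_prodFn A φ₁ c heig (kk m) v
  have hχB : ∀ (m : ℕ) v, chiF hpos e P k₀ ((Bm m).mulVec v) = lam m * chiF hpos e P k₀ v :=
    fun m v => func_prodFn A (chiF hpos e P k₀) c hχA (kk m) v
  have hχcont : Continuous (chiF hpos e P k₀) :=
    (chiF hpos e P k₀).continuous_of_finiteDimensional
  have hφcont : Continuous φ₁ := φ₁.continuous_of_finiteDimensional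
  have h1 : Tendsto (fun m => chiF hpos e P k₀ ((Bm m).mulVec (xs m))) atTop
      (𝓝 (chiF hpos e P k₀ y)) := (hχcont.tendsto y).comp hlim
  have h2 : Tendsto (fun m => chiF hpos e P k₀ (xs m)) atTop
      (𝓝 (chiF hpos e P k₀ x)) := (hχcont.tendsto x).comp hxs
  have hce : chiF hpos e P k₀ x ≠ 0 := hchi k₀
  have hne : ∀ᶠ m in atTop, chiF hpos e P k₀ (xs m) ≠ 0 := h2.eventually_ne hce
  have hdiv : Tendsto
      (fun m => chiF hpos e P k₀ ((Bm m).mulVec (xs m)) / chiF hpos e P k₀ (xs m)) atTop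
      (𝓝 (chiF hpos e P k₀ y / chiF hpos e P k₀ x)) := h1.div h2 hce
  have hlameq : (fun m => chiF hpos e P k₀ ((Bm m).mulVec (xs m)) / chiF hpos e P k₀ (xs m))
      =ᶠ[atTop] lam := by
    filter_upwards [hne] with m hm
    rw [hχB m (xs m), mul_div_assoc, div_self hm, mul_one]
  have hlamlim : Tendsto lam atTop (𝓝 (chiF hpos e P k₀ y / chiF hpos e P k₀ x)) :=
    hdiv.congr' hlameq
  have h3 : Tendsto (fun m => φ₁ ((Bm m).mulVec (xs m))) atTop (𝓝 (φ₁ y)) :=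
    (hφcont.tendsto y).comp hlim
  have h4 : Tendsto (fun m => φ₁ ((Bm m).mulVec (xs m))) atTop
      (𝓝 ((chiF hpos e P k₀ y / chiF hpos e P k₀ x) * φ₁ x)) := by
    have h5 : Tendsto (fun m => lam m * φ₁ (xs m)) atTop
        (𝓝 ((chiF hpos e P k₀ y / chiF hpos e P k₀ x) * φ₁ x)) :=
      hlamlim.mul ((hφcont.tendsto x).comp hxs)
    exact h5.congr fun m => (hφB m (xs m)).symm
  have hfin : φ₁ y = (chiF hpos e P k₀ y / chiF hpos e P k₀ x) * φ₁ x :=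
    tendsto_nhds_unique h3 h4
  rw [hy1, hφ₁M x (x_mem_Morb A x), mul_zero] at hfin
  exact one_ne_zero hfin

end casetwo


/-- Corollary 1.4: if `G` is not hypercyclic, then `E = {x : J_G(x) = ℂⁿ}` is contained in
a union of `r ≤ n` `G`-invariant subspaces of dimension `n - 1`. -/
theorem stmt14 (n p r : ℕ) (hn : 0 < n) (A : Fin p → Matrix (Fin n) (Fin n) ℂ)
    (hcomm : ∀ i j, A i * A j = A j * A i)
    (P : (Matrix (Fin n) (Fin n) ℂ)ˣ)
    (hr1 : 1 ≤ r) (hr2 : r ≤ n)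
    (nn : Fin r → ℕ) (hpos : ∀ k, 0 < nn k)
    (e : Fin n ≃ ((k : Fin r) × Fin (nn k)))
    (hconj : ∀ B ∈ genSG A, ∃ b : (k : Fin r) → Matrix (Fin (nn k)) (Fin (nn k)) ℂ,
      (∀ k, IsTn (b k)) ∧
      ((↑P⁻¹ : Matrix (Fin n) (Fin n) ℂ) * B * (P : Matrix (Fin n) (Fin n) ℂ)).submatrix
          e.symm e.symm = Matrix.blockDiagonal' b)
    (hnothc : ¬ ∃ v : Fin n → ℂ, Dense {w : Fin n → ℂ | ∃ B ∈ genSG A, w = B.mulVec v}) :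
    ∃ H : Fin r → Submodule ℂ (Fin n → ℂ),
      (∀ k, Module.finrank ℂ (H k) = n - 1) ∧
      (∀ k, ∀ B ∈ genSG A, ∀ x ∈ H k, B.mulVec x ∈ H k) ∧
      {x : Fin n → ℂ | JSet A x = Set.univ} ⊆ ⋃ k : Fin r, (H k : Set (Fin n → ℂ)) := by
  classical
  have hAj := fun j : Fin p => hconj (A j) (genSG_gen A j)
  choose b hTn hbj using hAj
  -- witness vectors
  set vk : Fin r → (Fin n → ℂ) := fun k =>
    (↑P : Matrix (Fin n) (Fin n) ℂ) *ᵥ Pi.single (e.symm ⟨k, ⟨0, hpos k⟩⟩) 1 with hvk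
  have hchivk : ∀ k, chiF hpos e P k (vk k) = 1 := by
    intro k
    rw [chiF_apply, hvk]
    simp only []
    rw [Matrix.mulVec_mulVec, Units.inv_mul, Matrix.one_mulVec, Pi.single_eq_same]
  refine ⟨fun k => LinearMap.ker (chiF hpos e P k), ?_, ?_, ?_⟩
  · -- finrank
    intro k
    show Module.finrank ℂ (LinearMap.ker (chiF hpos e P k)) = n - 1
    have hsurj : LinearMap.range (chiF hpos e P k) = ⊤ := by
      rw [LinearMap.range_eq_top]
      intro z
      refine ⟨z • vk k, ?_⟩
      rw [LinearMap.map_smul, hchivk k, smul_eq_mul, mul_one]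
    have hr := LinearMap.finrank_range_add_finrank_ker (chiF hpos e P k)
    rw [hsurj] at hr
    rw [finrank_top] at hr
    rw [Module.finrank_self] at hr
    have hn' : Module.finrank ℂ (Fin n → ℂ) = n := by
      rw [Module.finrank_fintype_fun_eq_card, Fintype.card_fin]
    rw [hn'] at hr
    omega
  · -- invariance
    intro k B hB v hv
    rw [LinearMap.mem_ker] at hv ⊢
    obtain ⟨kk, hkk, rfl⟩ := hB
    have hgen : ∀ (j : Fin p) (u : Fin n → ℂ),
        chiF hpos e P k ((A j).mulVec u)
          = b j k ⟨0, hpos k⟩ ⟨0, hpos k⟩ * chiF hpos e P k u :=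
      fun j u => chi_step hpos e P (A j) (b j) (hTn j) (hbj j) k u
    rw [func_prodFn A (chiF hpos e P k) (fun j => b j k ⟨0, hpos k⟩ ⟨0, hpos k⟩) hgen kk v,
      hv, mul_zero]
  · -- containment
    intro x hx
    rw [Set.mem_setOf_eq] at hx
    by_contra hnot
    rw [Set.mem_iUnion] at hnot
    push_neg at hnot
    have hchix : ∀ k, chiF hpos e P k x ≠ 0 := by
      intro k h0
      exact hnot k (LinearMap.mem_ker.mpr h0)
    by_cases hM : Morb A x = ⊤
    · exact hnothc ⟨x, case_top hcomm hM hx⟩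
    · exact case_lt hcomm P hpos e b hTn hbj hchix hM hx
end

section
/- A finitely generated sub-semigroup G of ℂ (acting on ℂ by multiplication) is hypercyclic if and only if it is locally hypercyclic; i.e., there exists v ∈ ℂ with dense orbit G(v) if and only if there exists v ∈ ℂ \ {0} with J_G(v) = ℂ. -/
open Filter Topology

/-- Extended limit set for a finitely generated sub-semigroup of `ℂ` acting by
multiplication. -/
def JSetC {p : ℕ} (a : Fin p → ℂ) (x : ℂ) : Set ℂ :=
  {y | ∃ (xs : ℕ → ℂ) (k : ℕ → Fin p → ℕ),
    Filter.Tendsto (fun m => ∑ j, k m j) Filter.atTop Filter.atTop ∧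
    Filter.Tendsto xs Filter.atTop (𝓝 x) ∧
    Filter.Tendsto (fun m => (∏ j, a j ^ k m j) * xs m) Filter.atTop (𝓝 y)}

/-- A finitely generated sub-semigroup of `ℂ` is hypercyclic iff it is locally
hypercyclic. -/
theorem stmt15 (p : ℕ) (a : Fin p → ℂ) :
    (∃ v : ℂ, Dense {w : ℂ | ∃ k : Fin p → ℕ, 0 < ∑ j, k j ∧ w = (∏ j, a j ^ k j) * v}) ↔
      ∃ v : ℂ, v ≠ 0 ∧ JSetC a v = Set.univ := by
  constructor
  · rintro ⟨v, hv⟩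
    have hv0 : v ≠ 0 := by
      rintro rfl
      have h0 : Dense ({0} : Set ℂ) := by
        refine hv.mono ?_
        rintro w ⟨k, -, rfl⟩
        simp
      have := h0.closure_eq
      rw [closure_singleton] at this
      exact absurd (this ▸ Set.mem_univ (1 : ℂ)) (by simp)
    -- for every N, the orbit points with exponent sum > N are dense
    have hdense : ∀ N : ℕ,
        Dense {w : ℂ | ∃ k : Fin p → ℕ, N < ∑ j, k j ∧ w = (∏ j, a j ^ k j) * v} := by
      intro N
      have hfin : ((fun k : Fin p → ℕ => (∏ j, a j ^ k j) * v) ''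
          {k | ∑ j, k j ≤ N}).Finite := by
        apply Set.Finite.image
        apply (Set.finite_Iic (fun _ => N : Fin p → ℕ)).subset
        intro k hk
        intro j
        exact le_trans (Finset.single_le_sum (fun i _ => Nat.zero_le _)
          (Finset.mem_univ j)) hk
      refine (hv.diff_finite hfin).mono ?_
      rintro w ⟨⟨k, hk0, rfl⟩, hw2⟩
      refine ⟨k, ?_, rfl⟩
      by_contra h
      exact hw2 ⟨k, Nat.le_of_not_lt h, rfl⟩
    refine ⟨v, hv0, Set.eq_univ_iff_forall.mpr fun y => ?_⟩
    have key : ∀ m : ℕ, ∃ k : Fin p → ℕ, m < ∑ j, k j ∧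
        dist ((∏ j, a j ^ k j) * v) y < 1 / (m + 1) := by
      intro m
      obtain ⟨z, hz1, k, hk1, rfl⟩ := Metric.dense_iff.mp (hdense m) y (1 / (m + 1))
        (by positivity)
      exact ⟨k, hk1, by simpa [dist_comm] using hz1⟩
    choose k hk1 hk2 using key
    refine ⟨fun _ => v, k, ?_, tendsto_const_nhds, ?_⟩
    · exact tendsto_atTop_mono (fun m => (hk1 m).le) tendsto_id
    · rw [tendsto_iff_dist_tendsto_zero]
      refine squeeze_zero (fun m => dist_nonneg) (fun m => (hk2 m).le) ?_
      exact tendsto_one_div_add_atTop_nhds_zero_nat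
  · rintro ⟨v, hv0, hJ⟩
    refine ⟨v, fun y => ?_⟩
    obtain ⟨xs, k, hsum, hxs, hprod⟩ : y ∈ JSetC a v := hJ ▸ Set.mem_univ y
    have hne : ∀ᶠ m in atTop, xs m ≠ 0 := hxs.eventually_ne hv0
    have hg : Tendsto (fun m => ∏ j, a j ^ k m j) atTop (𝓝 (y / v)) := by
      have hdiv : Tendsto (fun m => ((∏ j, a j ^ k m j) * xs m) / xs m) atTop
          (𝓝 (y / v)) := hprod.div hxs hv0
      refine hdiv.congr' ?_
      filter_upwards [hne] with m hm
      field_simp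
    have hgv : Tendsto (fun m => (∏ j, a j ^ k m j) * v) atTop (𝓝 y) := by
      have := hg.mul_const v
      rwa [div_mul_cancel₀ _ hv0] at this
    refine mem_closure_of_tendsto hgv ?_
    filter_upwards [hsum.eventually_gt_atTop 0] with m hm
    exact ⟨k m, hm, rfl⟩
end

section
/- Let n ≥ 2, let a, b ∈ ℂ with 1/|a| < |b| < 1 < |a|, and let G be the multiplicative semigroup of diagonal matrices generated by B = bI_n and A_k = diag(a,…,a,1,a,…,a) (with 1 in the k-th position), k = 1,…,n. Then the orbit G(u_0) of u_0 = (1,…,1) is contained in F = {(a^{ℓ_1}λ, …, a^{ℓ_n}λ) : λ ∈ ℂ, ℓ_1,…,ℓ_n ∈ ℤ}, and the closure of F has empty interior; consequently G(u_0) is not dense in ℂⁿ. -/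
open Filter Topology Matrix

/-- The set `{0} ∪ {a^k : k ∈ ℤ}` for `‖a‖ > 1`. -/
def powSet (a : ℂ) : Set ℂ := {z | z = 0 ∨ ∃ k : ℤ, z = a ^ k}

lemma powSet_countable (a : ℂ) : (powSet a).Countable := by
  have : powSet a = {0} ∪ Set.range (fun k : ℤ => a ^ k) := by
    ext z; simp [powSet, eq_comm, Set.range]
  rw [this]
  exact (Set.countable_singleton 0).union (Set.countable_range _)

lemma powSet_closed (a : ℂ) (ha : 1 < ‖a‖) : IsClosed (powSet a) := by
  rw [← isOpen_compl_iff, Metric.isOpen_iff]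
  intro z hz
  simp only [Set.mem_compl_iff, powSet, Set.mem_setOf_eq, not_or, not_exists] at hz
  obtain ⟨hz0, hzk⟩ := hz
  have hr : 0 < ‖z‖ := norm_pos_iff.mpr hz0
  set r := ‖z‖ with hr_def
  obtain ⟨N, hN⟩ : ∃ N : ℕ, max (2 * r) (2 / r) < ‖a‖ ^ N :=
    pow_unbounded_of_one_lt _ ha
  have h2r : 2 * r < ‖a‖ ^ (N : ℤ) := by
    rw [zpow_natCast]; exact (le_max_left _ _).trans_lt hN
  have h2r' : ‖a‖ ^ (-(N : ℤ)) < r / 2 := by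
    have h1 : 2 / r < ‖a‖ ^ N := (le_max_right _ _).trans_lt hN
    have hA : (0:ℝ) < ‖a‖ ^ N := by positivity
    have h2 : 2 < r * ‖a‖ ^ N := by
      have := (div_lt_iff₀ hr).mp h1
      nlinarith
    rw [_root_.zpow_neg, zpow_natCast, inv_eq_one_div, div_lt_iff₀ hA]
    nlinarith
  set T : Finset ℤ := Finset.Icc (-(N : ℤ)) N with hT
  have hTne : (T.image fun k => ‖z - a ^ k‖).Nonempty := by
    refine Finset.image_nonempty.mpr ⟨0, ?_⟩
    simp [hT]
  set ε₂ := (T.image fun k => ‖z - a ^ k‖).min' hTne with hε₂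
  have hε₂pos : 0 < ε₂ := by
    obtain ⟨k, hk, hke⟩ := Finset.mem_image.mp ((T.image fun k => ‖z - a ^ k‖).min'_mem hTne)
    rw [hε₂, ← hke]
    exact norm_pos_iff.mpr (sub_ne_zero.mpr (hzk k))
  refine ⟨min (r / 2) ε₂, lt_min (by positivity) hε₂pos, ?_⟩
  intro w hw
  rw [Metric.mem_ball, dist_eq_norm] at hw
  have hwz : ‖w - z‖ < r / 2 := hw.trans_le (min_le_left _ _)
  have hwnorm_lb : r / 2 < ‖w‖ := by
    have h1 : ‖z‖ - ‖w‖ ≤ ‖w - z‖ := by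
      have := norm_sub_norm_le z w
      rwa [show z - w = -(w - z) by ring, norm_neg] at this
    linarith
  have hwnorm_ub : ‖w‖ < 3 * r / 2 := by
    have h1 : ‖w‖ - ‖z‖ ≤ ‖w - z‖ := norm_sub_norm_le w z
    linarith
  simp only [Set.mem_compl_iff, powSet, Set.mem_setOf_eq, not_or, not_exists]
  refine ⟨by intro h; rw [h, norm_zero] at hwnorm_lb; linarith, ?_⟩
  intro k hk
  rw [hk, norm_zpow] at hwnorm_lb hwnorm_ub
  by_cases hk1 : (N : ℤ) < k
  · have : ‖a‖ ^ (N : ℤ) ≤ ‖a‖ ^ k := zpow_le_zpow_right₀ ha.le hk1.le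
    linarith
  by_cases hk2 : k < -(N : ℤ)
  · have : ‖a‖ ^ k ≤ ‖a‖ ^ (-(N : ℤ)) := zpow_le_zpow_right₀ ha.le hk2.le
    linarith
  · have hkT : k ∈ T := Finset.mem_Icc.mpr ⟨not_lt.mp hk2, not_lt.mp hk1⟩
    have : ε₂ ≤ ‖z - a ^ k‖ :=
      Finset.min'_le _ _ (Finset.mem_image.mpr ⟨k, hkT, rfl⟩)
    have h3 : ‖z - a ^ k‖ = ‖w - z‖ := by
      rw [hk, show z - a ^ k = -(a ^ k - z) by ring, norm_neg]
    rw [h3] at this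
    have := hw.trans_le (min_le_right _ _)
    linarith

/-- The orbit of `u₀ = (1,…,1)` under the semigroup generated by `bI` and the matrices
`A_k = diag(a,…,a,1,a,…,a)` is contained in `F = {(a^{ℓ₁}λ,…,a^{ℓₙ}λ)}`, whose closure
has empty interior; hence this orbit is not dense. -/
theorem stmt16 (n : ℕ) (hn : 2 ≤ n) (a b : ℂ)
    (ha : 1 < ‖a‖) (hb1 : 1 / ‖a‖ < ‖b‖) (hb2 : ‖b‖ < 1) :
    ({w : Fin n → ℂ | ∃ (m : ℕ) (km : Fin n → ℕ), 0 < m + ∑ k, km k ∧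
        w = fun i => b ^ m * ∏ k, (if i = k then (1 : ℂ) else a) ^ km k} ⊆
      {w : Fin n → ℂ | ∃ (lam : ℂ) (l : Fin n → ℤ), w = fun i => a ^ (l i) * lam}) ∧
    interior (closure
      {w : Fin n → ℂ | ∃ (lam : ℂ) (l : Fin n → ℤ), w = fun i => a ^ (l i) * lam}) = ∅ ∧
    ¬ Dense {w : Fin n → ℂ | ∃ (m : ℕ) (km : Fin n → ℕ), 0 < m + ∑ k, km k ∧
        w = fun i => b ^ m * ∏ k, (if i = k then (1 : ℂ) else a) ^ km k} := by
  have ha0 : a ≠ 0 := by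
    intro h; rw [h, norm_zero] at ha; linarith
  set Orb := {w : Fin n → ℂ | ∃ (m : ℕ) (km : Fin n → ℕ), 0 < m + ∑ k, km k ∧
        w = fun i => b ^ m * ∏ k, (if i = k then (1 : ℂ) else a) ^ km k} with hOrb
  set F := {w : Fin n → ℂ | ∃ (lam : ℂ) (l : Fin n → ℤ), w = fun i => a ^ (l i) * lam} with hF
  -- Part 1 : Orb ⊆ F
  have part1 : Orb ⊆ F := by
    rintro w ⟨m, km, -, rfl⟩
    refine ⟨b ^ m, fun i => ((∑ k, km k) - km i : ℕ), ?_⟩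
    funext i
    have hsum : ∑ k ∈ Finset.univ.erase i, km k = (∑ k, km k) - km i := by
      have := Finset.sum_erase_add Finset.univ km (Finset.mem_univ i)
      omega
    have hprod : ∏ k, (if i = k then (1 : ℂ) else a) ^ km k
        = a ^ ((∑ k, km k) - km i) := by
      rw [← Finset.prod_erase_mul _ _ (Finset.mem_univ i)]
      simp only [if_pos rfl, if_true, one_pow, mul_one]
      rw [← hsum]
      calc ∏ k ∈ Finset.univ.erase i, (if i = k then (1:ℂ) else a) ^ km k
          = ∏ k ∈ Finset.univ.erase i, a ^ km k :=
            Finset.prod_congr rfl fun k hk => by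
              rw [if_neg (Finset.ne_of_mem_erase hk).symm]
        _ = a ^ ∑ k ∈ Finset.univ.erase i, km k := Finset.prod_pow_eq_pow_sum _ _ _
    rw [hprod, zpow_natCast]
    ring
  -- indices 0 and 1
  set i0 : Fin n := ⟨0, by omega⟩ with hi0
  set i1 : Fin n := ⟨1, by omega⟩ with hi1
  have hi01 : i0 ≠ i1 := by simp [hi0, hi1, Fin.ext_iff]
  -- the closed "trap" set S
  set S : Set (Fin n → ℂ) := {x | x i0 = 0 ∨ x i1 / x i0 ∈ powSet a} with hS
  have hFS : F ⊆ S := by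
    rintro w ⟨lam, l, rfl⟩
    by_cases hlam : lam = 0
    · left; simp [hlam]
    · right
      refine Or.inr ⟨l i1 - l i0, ?_⟩
      show (a ^ l i1 * lam) / (a ^ l i0 * lam) = a ^ (l i1 - l i0)
      rw [zpow_sub₀ ha0, mul_div_mul_right _ _ hlam]
  have hScompl : Sᶜ = {x : Fin n → ℂ | x i0 ≠ 0} ∩ (fun x => x i1 / x i0) ⁻¹' (powSet a)ᶜ := by
    ext x
    simp only [hS, Set.mem_compl_iff, Set.mem_setOf_eq, Set.mem_inter_iff, Set.mem_preimage,
      not_or]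
  have hSclosed : IsClosed S := by
    rw [← isOpen_compl_iff, hScompl]
    refine ContinuousOn.isOpen_inter_preimage ?_ ?_ (powSet_closed a ha).isOpen_compl
    · exact ((continuous_apply i1).continuousOn).div
        ((continuous_apply i0).continuousOn) (fun x hx => hx)
    · exact isOpen_compl_singleton.preimage (continuous_apply i0)
  -- the complement of S is dense
  have hSdense : Dense Sᶜ := by
    rw [dense_iff_inter_open]
    rintro U hU ⟨x, hxU⟩
    classical
    set h : ℂ × ℂ → (Fin n → ℂ) :=
      fun p => Function.update (Function.update x i0 p.1) i1 p.2 with hh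
    have hhcont : Continuous h := by
      refine continuous_pi fun j => ?_
      rcases eq_or_ne j i1 with rfl | hj1
      · simpa [hh, Function.update_apply] using continuous_snd
      rcases eq_or_ne j i0 with rfl | hj0
      · simp only [hh, Function.update_apply, if_neg hj1, if_pos rfl]
        exact continuous_fst
      · simp only [hh, Function.update_apply, if_neg hj1, if_neg hj0]
        exact continuous_const
    have hhx : h (x i0, x i1) = x := by
      simp [hh, Function.update_eq_self]
    have hmem : (x i0, x i1) ∈ h ⁻¹' U := by
      rw [Set.mem_preimage, hhx]; exact hxU
    obtain ⟨ε, hεpos, hball⟩ := Metric.isOpen_iff.mp (hU.preimage hhcont) _ hmem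
    -- choose u ≠ 0 close to x i0
    obtain ⟨u, hu0, huball⟩ :
        ∃ u, u ∈ ({(0 : ℂ)}ᶜ : Set ℂ) ∧ u ∈ Metric.ball (x i0) ε := by
      obtain ⟨u, h1, h2⟩ := (dense_compl_singleton (0 : ℂ)).exists_mem_open
        Metric.isOpen_ball ⟨x i0, Metric.mem_ball_self hεpos⟩
      exact ⟨u, h1, h2⟩
    -- choose v close to x i1 avoiding u • powSet a
    have hCcount : ((fun t => u * t) '' powSet a).Countable :=
      (powSet_countable a).image _
    obtain ⟨v, hv1, hvball⟩ :
        ∃ v, v ∈ ((fun t => u * t) '' powSet a)ᶜ ∧ v ∈ Metric.ball (x i1) ε := by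
      obtain ⟨v, h1, h2⟩ := (hCcount.dense_compl ℂ).exists_mem_open
        Metric.isOpen_ball ⟨x i1, Metric.mem_ball_self hεpos⟩
      exact ⟨v, h1, h2⟩
    refine ⟨h (u, v), ?_, ?_⟩
    · apply hball
      rw [Metric.mem_ball, Prod.dist_eq]
      exact max_lt (Metric.mem_ball.mp huball) (Metric.mem_ball.mp hvball)
    · have hy0 : h (u, v) i0 = u := by
        simp [hh, Function.update_of_ne hi01, Function.update_self]
      have hy1 : h (u, v) i1 = v := by
        simp [hh, Function.update_self]
      simp only [hS, Set.mem_compl_iff, Set.mem_setOf_eq, not_or, hy0, hy1]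
      have hu0' : u ≠ 0 := hu0
      refine ⟨hu0', fun hD => ?_⟩
      apply hv1
      exact ⟨v / u, hD, by field_simp⟩
  -- Part 2 : empty interior
  have part2 : interior (closure F) = ∅ := by
    have h1 : closure F ⊆ S := closure_minimal hFS hSclosed
    have h2 : interior S = ∅ := by
      rw [interior_eq_empty_iff_dense_compl]; exact hSdense
    have := interior_mono h1
    rw [h2] at this
    exact Set.eq_empty_of_subset_empty this
  -- Part 3 : not dense
  refine ⟨part1, part2, ?_⟩
  intro hdense
  obtain ⟨y, hy⟩ : (Sᶜ : Set (Fin n → ℂ)).Nonempty := hSdense.nonempty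
  have h1 : y ∈ closure Orb := hdense y
  have h2 : y ∈ closure F := closure_mono part1 h1
  exact hy (closure_minimal hFS hSclosed h2)
end

section
/- Let n ≥ 2, and let a, b ∈ ℂ with |a| > 1, 1/|a| < |b| < 1, such that {a^k b^l : k, l ∈ ℕ} is dense in ℂ. Let G be the abelian semigroup generated by the n+1 diagonal matrices B = bI_n and A_k = diag(a,…,a,1,a,…,a) (1 in position k), k = 1,…,n. Then J_G(e_k) = ℂⁿ for every k = 1,…,n, where (e_1,…,e_n) is the canonical basis of ℂⁿ. -/
open Filter Topology Matrix

lemma prodDiag {n p : ℕ} (g : Fin p → Fin n → ℂ) :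
    (List.ofFn fun j => Matrix.diagonal (g j)).prod
      = Matrix.diagonal (fun i => ∏ j, g j i) := by
  have h1 : (List.ofFn fun j => Matrix.diagonal (g j))
      = (List.ofFn g).map (Matrix.diagonalRingHom (Fin n) ℂ) := by
    rw [List.map_ofFn]; rfl
  rw [h1, ← map_list_prod, List.prod_ofFn,
    show (∏ j, g j) = fun i => ∏ j, g j i from funext fun i => Finset.prod_apply i Finset.univ g]
  rfl

lemma prodIte {N : ℕ} (p1 p2 p3 : Fin N) (h12 : p1 ≠ p2) (h13 : p1 ≠ p3) (h23 : p2 ≠ p3)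
    (g : Fin N → ℂ) (m s l : ℕ) :
    ∏ t, (g t) ^ (if t = p1 then m else if t = p2 then s else if t = p3 then l else 0)
      = g p1 ^ m * g p2 ^ s * g p3 ^ l := by
  have he : ∀ t : Fin N, (g t) ^ (if t = p1 then m else if t = p2 then s else if t = p3 then l else 0)
      = (if t = p1 then g t ^ m else 1) * ((if t = p2 then g t ^ s else 1) * (if t = p3 then g t ^ l else 1)) := by
    intro t
    by_cases h1 : t = p1 <;> by_cases h2 : t = p2 <;> by_cases h3 : t = p3 <;> simp_all
  simp_rw [he]
  rw [Finset.prod_mul_distrib, Finset.prod_mul_distrib]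
  simp [mul_assoc]

lemma sumIte {N : ℕ} (p1 p2 p3 : Fin N) (h12 : p1 ≠ p2) (h13 : p1 ≠ p3) (h23 : p2 ≠ p3)
    (m s l : ℕ) :
    ∑ t : Fin N, (if t = p1 then m else if t = p2 then s else if t = p3 then l else 0)
      = m + s + l := by
  have he : ∀ t : Fin N, (if t = p1 then m else if t = p2 then s else if t = p3 then l else 0)
      = (if t = p1 then m else 0) + ((if t = p2 then s else 0) + (if t = p3 then l else 0)) := by
    intro t
    by_cases h1 : t = p1 <;> by_cases h2 : t = p2 <;> by_cases h3 : t = p3 <;> simp_all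
  simp_rw [he]
  rw [Finset.sum_add_distrib, Finset.sum_add_distrib]
  simp [add_assoc]

/-- With `B = bI` and `A_k = diag(a,…,a,1,a,…,a)` as generators (and `{a^k b^l}` dense in
`ℂ`), one has `J_G(e_k) = ℂⁿ` for every canonical basis vector `e_k`. -/
theorem stmt17 (n : ℕ) (hn : 2 ≤ n) (a b : ℂ)
    (ha : 1 < ‖a‖) (hb1 : 1 / ‖a‖ < ‖b‖) (hb2 : ‖b‖ < 1)
    (hdense : Dense {w : ℂ | ∃ k l : ℕ, w = a ^ k * b ^ l})
    (A : Fin (n + 1) → Matrix (Fin n) (Fin n) ℂ)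
    (hA : ∀ j : Fin (n + 1), A j =
      if (j : ℕ) < n then
        Matrix.diagonal (fun i : Fin n => if (i : ℕ) = (j : ℕ) then 1 else a)
      else b • (1 : Matrix (Fin n) (Fin n) ℂ)) :
    ∀ k : Fin n, JSet A (Pi.single k 1) = Set.univ := by
  intro k
  rw [Set.eq_univ_iff_forall]
  intro y
  -- basic facts
  have ha0 : a ≠ 0 := by intro h; rw [h] at ha; simp at ha; linarith
  have hapos : (0:ℝ) < ‖a‖ := by linarith
  have hbpos : (0:ℝ) < ‖b‖ := lt_trans (by positivity) hb1
  have hb0 : b ≠ 0 := by simpa using hbpos.ne'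
  have hab : 1 ≤ ‖a‖ * ‖b‖ := by
    rw [div_lt_iff₀ hapos] at hb1; linarith [mul_comm ‖a‖ ‖b‖ ▸ hb1]
  -- a second index
  haveI : Nontrivial (Fin n) := Fin.nontrivial_iff_two_le.mpr hn
  obtain ⟨k', hk'⟩ := exists_ne k
  set p1 : Fin (n+1) := k'.castSucc with hp1
  set p2 : Fin (n+1) := k.castSucc with hp2
  set p3 : Fin (n+1) := Fin.last n with hp3
  have h12 : p1 ≠ p2 := fun h => hk' (Fin.castSucc_injective n h)
  have h13 : p1 ≠ p3 := (Fin.castSucc_lt_last k').ne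
  have h23 : p2 ≠ p3 := (Fin.castSucc_lt_last k).ne
  -- diagonal entries of generators
  set f : Fin (n+1) → Fin n → ℂ :=
    fun j i => if (j : ℕ) < n then (if (i : ℕ) = (j : ℕ) then 1 else a) else b with hf
  have hAdiag : ∀ j, A j = Matrix.diagonal (f j) := by
    intro j
    rw [hA j, hf]
    by_cases h : (j : ℕ) < n
    · simp [h]
    · simp only [h, if_false]
      ext i i'
      rw [Matrix.smul_apply, Matrix.diagonal_apply, Matrix.one_apply]
      split <;> simp_all
  have hf1 : ∀ i : Fin n, f p1 i = if (i:ℕ) = (k':ℕ) then 1 else a := by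
    intro i; rw [hf]; simp [hp1, k'.isLt]
  have hf2 : ∀ i : Fin n, f p2 i = if (i:ℕ) = (k:ℕ) then 1 else a := by
    intro i; rw [hf]; simp [hp2, k.isLt]
  have hf3 : ∀ i : Fin n, f p3 i = b := by
    intro i; rw [hf]; simp [hp3]
  -- choose approximants from density
  have hchoice : ∀ j : ℕ, ∃ ml : ℕ × ℕ, ‖a ^ ml.1 * b ^ ml.2 - y k‖ < 1/(j+1) := by
    intro j
    have hpos : (0:ℝ) < 1/(j+1) := by positivity
    obtain ⟨w, hw1, hw2⟩ := Metric.dense_iff.mp hdense (y k) (1/(j+1)) hpos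
    obtain ⟨m, l, rfl⟩ := hw2
    exact ⟨(m, l), by simpa [dist_eq_norm, norm_sub_rev] using Metric.mem_ball.mp hw1⟩
  choose ml hml using hchoice
  set mm : ℕ → ℕ := fun j => (ml j).1 with hmm
  set ll : ℕ → ℕ := fun j => (ml j).2 with hll
  set ss : ℕ → ℕ := fun j => ll j + mm j + j with hss
  -- exponents
  set kf : ℕ → Fin (n+1) → ℕ :=
    fun j t => if t = p1 then mm j else if t = p2 then ss j else if t = p3 then ll j else 0 with hkf
  -- diagonal of the product
  set d : ℕ → Fin n → ℂ := fun j i => ∏ t, (f t i) ^ (kf j t) with hd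
  have hdval : ∀ j i, d j i = (f p1 i) ^ (mm j) * (f p2 i) ^ (ss j) * b ^ (ll j) := by
    intro j i
    rw [hd]
    simp only [hkf]
    rw [prodIte p1 p2 p3 h12 h13 h23 (fun t => f t i) (mm j) (ss j) (ll j), hf3]
  have hprod : ∀ j, (List.ofFn fun t => A t ^ kf j t).prod = Matrix.diagonal (d j) := by
    intro j
    have : ∀ t, A t ^ kf j t = Matrix.diagonal (fun i => (f t i) ^ (kf j t)) := by
      intro t
      rw [hAdiag t, Matrix.diagonal_pow]
      congr 1
    simp_rw [this]
    rw [prodDiag]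
  have hdk : ∀ j, d j k = a ^ (mm j) * b ^ (ll j) := by
    intro j
    rw [hdval, hf1, hf2]
    have : ((k:ℕ) = (k':ℕ)) = False := by
      simp [Fin.val_eq_val]; exact fun h => hk' h.symm
    simp [this]
  have hdne : ∀ j i, d j i ≠ 0 := by
    intro j i
    rw [hdval]
    have h1 : f p1 i ≠ 0 := by rw [hf1]; split <;> simp [ha0]
    have h2 : f p2 i ≠ 0 := by rw [hf2]; split <;> simp [ha0]
    exact mul_ne_zero (mul_ne_zero (pow_ne_zero _ h1) (pow_ne_zero _ h2)) (pow_ne_zero _ hb0)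
  have hdnorm : ∀ j i, i ≠ k → ‖a‖ ^ j ≤ ‖d j i‖ := by
    intro j i hik
    rw [hdval, hf2, if_neg (by simpa [Fin.val_eq_val] using hik)]
    have h1 : (1:ℝ) ≤ ‖f p1 i‖ ^ (mm j) := by
      rw [hf1]; split
      · simp
      · exact one_le_pow₀ ha.le
    rw [norm_mul, norm_mul, norm_pow, norm_pow, norm_pow]
    have h2 : ‖a‖ ^ j ≤ ‖a‖ ^ (ss j) * ‖b‖ ^ (ll j) := by
      simp only [hss]
      rw [show ll j + mm j + j = (ll j) + (mm j + j) by ring, pow_add, pow_add]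
      calc ‖a‖ ^ j = 1 * (1 * ‖a‖ ^ j) := by ring
        _ ≤ (‖a‖ ^ ll j * ‖b‖ ^ ll j) * (‖a‖ ^ mm j * ‖a‖ ^ j) := by
            apply mul_le_mul
            · rw [← mul_pow]; exact one_le_pow₀ hab
            · apply mul_le_mul_of_nonneg_right (one_le_pow₀ ha.le) (by positivity)
            · positivity
            · positivity
        _ = ‖a‖ ^ ll j * (‖a‖ ^ mm j * ‖a‖ ^ j) * ‖b‖ ^ ll j := by ring
    calc ‖a‖ ^ j = 1 * (‖a‖ ^ j) := by ring
      _ ≤ ‖f p1 i‖ ^ mm j * (‖a‖ ^ ss j * ‖b‖ ^ ll j) := by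
          apply mul_le_mul h1 h2 (by positivity) (by positivity)
      _ = ‖f p1 i‖ ^ mm j * ‖a‖ ^ ss j * ‖b‖ ^ ll j := by ring
  -- the approximating points
  set xs : ℕ → Fin n → ℂ := fun j i => if i = k then 1 else y i / d j i with hxs
  refine ⟨xs, kf, ?_, ?_, ?_⟩
  · -- sum of exponents tends to infinity
    have hsum : ∀ j, (∑ t, kf j t) = mm j + ss j + ll j := fun j =>
      sumIte p1 p2 p3 h12 h13 h23 (mm j) (ss j) (ll j)
    apply tendsto_atTop_mono (fun j => ?_) tendsto_id
    rw [hsum]; simp only [hss, id]; omega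
  · -- xs → e_k
    rw [tendsto_pi_nhds]
    intro i
    by_cases hik : i = k
    · subst hik
      simp only [hxs, if_pos rfl, Pi.single_eq_same]
      exact tendsto_const_nhds
    · simp only [hxs, if_neg hik, Pi.single_eq_of_ne hik]
      rw [tendsto_zero_iff_norm_tendsto_zero]
      apply squeeze_zero (fun j => norm_nonneg _) (g := fun j => ‖y i‖ / ‖a‖ ^ j)
      · intro j
        rw [norm_div]
        apply div_le_div_of_nonneg_left (norm_nonneg _) (by positivity) (hdnorm j i hik)
      · exact Tendsto.div_atTop tendsto_const_nhds (tendsto_pow_atTop_atTop_of_one_lt ha)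
  · -- images converge to y
    simp_rw [hprod]
    rw [tendsto_pi_nhds]
    intro i
    have hmv : ∀ j, (Matrix.diagonal (d j)).mulVec (xs j) i = d j i * xs j i :=
      fun j => Matrix.mulVec_diagonal _ _ _
    simp_rw [hmv]
    by_cases hik : i = k
    · subst hik
      simp only [hxs, if_pos rfl, mul_one]
      simp_rw [hdk]
      rw [tendsto_iff_dist_tendsto_zero]
      apply squeeze_zero (fun j => dist_nonneg) (g := fun j : ℕ => 1/(j+1:ℝ))
      · intro j; rw [dist_eq_norm]; exact (hml j).le
      · exact tendsto_one_div_add_atTop_nhds_zero_nat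
    · have : ∀ j, d j i * xs j i = y i := by
        intro j
        simp only [hxs, if_neg hik]
        rw [mul_div_cancel₀ _ (hdne j i)]
      simp_rw [this]
      exact tendsto_const_nhds
end

section
/- For every integer n ≥ 2 there exists an abelian semigroup G generated by n+1 invertible diagonal matrices A_1,…,A_{n+1} ∈ GL(n, ℂ) such that G has no dense orbit in ℂⁿ, yet J_G(e_k) = ℂⁿ for every k = 1,…,n, where (e_1,…,e_n) is the canonical basis. In particular, local hypercyclicity at every vector of a basis does not imply hypercyclicity. -/
open Filter Topology Matrix

lemma small_step (α β : ℝ) (hα : 0 < α) (hβ : 0 < β) (hirr : Irrational (α / β))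
    (ε : ℝ) (hε : 0 < ε) :
    ∃ (a0 b0 : ℕ) (δ : ℝ), 1 ≤ a0 ∧ δ = a0 * α - b0 * β ∧ δ ≠ 0 ∧ |δ| < ε ∧ |δ| ≤ β / 2 := by
  set ε' : ℝ := min ε (β / 2) with hε'def
  have hε' : 0 < ε' := lt_min hε (by linarith)
  obtain ⟨n, hn⟩ := exists_nat_gt (β / ε')
  have hn0 : 0 < n := by exact_mod_cast (div_pos hβ hε').trans hn
  obtain ⟨j, k, hk0, hkn, hjk⟩ := Real.exists_int_int_abs_mul_sub_le (α / β) hn0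
  set δ : ℝ := k * α - j * β with hδdef
  have hβne : β ≠ 0 := ne_of_gt hβ
  have hδeq : δ = β * (k * (α / β) - j) := by field_simp [hδdef]; ring
  have hδabs : |δ| < ε' := by
    rw [hδeq, abs_mul, abs_of_pos hβ]
    calc β * |k * (α / β) - j| ≤ β * (1 / (n + 1)) := by
          exact mul_le_mul_of_nonneg_left hjk hβ.le
      _ < ε' := by
          rw [mul_one_div, div_lt_iff₀ (by positivity)]
          have : β / ε' < n + 1 := hn.trans (by linarith)
          calc β = (β / ε') * ε' := by field_simp
            _ < (n + 1) * ε' := by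
                exact mul_lt_mul_of_pos_right this hε'
            _ = ε' * (n + 1) := by ring
  have hδne : δ ≠ 0 := by
    intro h
    have hk0' : (k : ℤ) ≠ 0 := ne_of_gt hk0
    have : Irrational (k * (α / β)) := hirr.intCast_mul hk0'
    have h2 : k * (α / β) - j = 0 := by
      have := hδeq
      rw [h] at this
      have := (mul_eq_zero.mp this.symm).resolve_left hβne
      linarith
    exact (this.ne_int j) (by linarith)
  have hjnn : 0 ≤ j := by
    have h1 : |k * (α / β) - j| ≤ 1 := hjk.trans (by
      rw [div_le_one (by positivity)]; push_cast; linarith)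
    have h2 : (0:ℝ) < k * (α / β) := by
      have : (0:ℝ) < (k:ℝ) := by exact_mod_cast hk0
      exact mul_pos this (div_pos hα hβ)
    have h3 := (abs_le.mp h1).2
    have h4 : (-1:ℝ) < (j:ℝ) := by linarith
    have h5 : (-1:ℤ) < j := by exact_mod_cast h4
    omega
  set a0 : ℕ := k.toNat with ha0
  set b0 : ℕ := j.toNat with hb0
  have hca : ((a0 : ℕ) : ℝ) = (k : ℝ) := by
    rw [ha0]; exact_mod_cast congrArg (Int.cast : ℤ → ℝ) (Int.toNat_of_nonneg hk0.le)
  have hcb : ((b0 : ℕ) : ℝ) = (j : ℝ) := by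
    rw [hb0]; exact_mod_cast congrArg (Int.cast : ℤ → ℝ) (Int.toNat_of_nonneg hjnn)
  have ha01 : 1 ≤ a0 := by omega
  have hδε : |δ| < ε := hδabs.trans_le (min_le_left _ _)
  have hδβ : |δ| ≤ β / 2 := (hδabs.trans_le (min_le_right _ _)).le
  exact ⟨a0, b0, δ, ha01, by rw [hδdef, hca, hcb], hδne,
    hδabs.trans_le (min_le_left _ _), (hδabs.trans_le (min_le_right _ _)).le⟩

lemma dense_aux (α β : ℝ) (hα : 0 < α) (hβ : 0 < β) (hirr : Irrational (α / β))
    (t ε : ℝ) (hε : 0 < ε) (m : ℕ) :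
    ∃ a b : ℕ, m ≤ a ∧ m ≤ b ∧ |a * α - b * β - t| < ε := by
  obtain ⟨a0, b0, δ, ha01, hδdef, hδne, hδε, hδβ⟩ := small_step α β hα hβ hirr ε hε
  rcases hδne.lt_or_gt with hneg | hpos
  · -- δ < 0
    have hδ'pos : 0 < -δ := by linarith
    have hδ'ε : -δ < ε := by rw [abs_of_neg hneg] at hδε; linarith
    have hδ'β : -δ ≤ β / 2 := by rw [abs_of_neg hneg] at hδβ; linarith
    have hb01 : 1 ≤ b0 := by
      rcases Nat.eq_zero_or_pos b0 with h | h
      · exfalso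
        have hδk : δ = a0 * α := by rw [hδdef, h]; push_cast; ring
        have hkpos : (1:ℝ) ≤ (a0:ℝ) := by exact_mod_cast ha01
        nlinarith
      · exact h
    obtain ⟨C, hCm, hCb⟩ : ∃ C : ℕ, m ≤ C ∧ |t| + m * (-δ) ≤ C * (β / 2) := by
      refine ⟨⌈(|t| + m * (-δ)) / (β / 2)⌉₊ + m, by omega, ?_⟩
      have h1 : (|t| + m * (-δ)) / (β / 2) ≤ ((⌈(|t| + m * (-δ)) / (β / 2)⌉₊ + m : ℕ):ℝ) := by
        push_cast
        linarith [Nat.le_ceil ((|t| + m * (-δ)) / (β / 2)), (Nat.cast_nonneg m : (0:ℝ) ≤ (m:ℝ))]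
      calc |t| + m * (-δ) = ((|t| + m * (-δ)) / (β / 2)) * (β / 2) := by field_simp
        _ ≤ _ := mul_le_mul_of_nonneg_right h1 (by linarith)
    have hTnn : ((C:ℝ) + m) * (-δ) ≤ C * β - t := by
      have h3 : (C:ℝ) * (-δ) ≤ C * (β/2) :=
        mul_le_mul_of_nonneg_left hδ'β (Nat.cast_nonneg C)
      have h4 : -|t| ≤ -t := by linarith [le_abs_self t]
      nlinarith
    obtain ⟨N, hN1, hN2, hNCm⟩ : ∃ N : ℕ, (C:ℝ) * β - t ≤ N * (-δ) ∧
        (N:ℝ) * (-δ) < (C * β - t) + (-δ) ∧ C + m ≤ N := by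
      have hTpos : 0 ≤ ((C:ℝ) * β - t) / (-δ) := by
        apply div_nonneg _ hδ'pos.le
        calc (0:ℝ) ≤ ((C:ℝ) + m) * (-δ) := by positivity
          _ ≤ _ := hTnn
      refine ⟨⌈((C:ℝ) * β - t) / (-δ)⌉₊, ?_, ?_, ?_⟩
      · calc (C:ℝ) * β - t = (((C:ℝ) * β - t) / (-δ)) * (-δ) := by field_simp
          _ ≤ _ := mul_le_mul_of_nonneg_right (Nat.le_ceil _) hδ'pos.le
      · have h5 := Nat.ceil_lt_add_one hTpos
        have h6 : (((C:ℝ) * β - t) / (-δ)) * (-δ) = (C:ℝ) * β - t := by field_simp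
        nlinarith
      · have h6 : ((C + m : ℕ) : ℝ) ≤ ((C:ℝ) * β - t) / (-δ) := by
          push_cast
          rw [le_div_iff₀ hδ'pos]
          exact hTnn
        exact_mod_cast h6.trans (Nat.le_ceil _)
    refine ⟨N * a0, N * b0 - C, ?_, ?_, ?_⟩
    · have h := Nat.mul_le_mul_left N ha01
      rw [Nat.mul_one] at h; omega
    · have h := Nat.mul_le_mul_left N hb01
      rw [Nat.mul_one] at h; omega
    · have hle : C ≤ N * b0 := by
        have h := Nat.mul_le_mul_left N hb01
        rw [Nat.mul_one] at h; omega
      have hsub : ((N * b0 - C : ℕ) : ℝ) = (N:ℝ) * b0 - C := by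
        push_cast [Nat.cast_sub hle]; ring
      have hval : ((N * a0 : ℕ) : ℝ) * α - ((N * b0 - C : ℕ) : ℝ) * β - t
          = ((C:ℝ) * β - t) - N * (-δ) := by
        rw [hsub, hδdef]; push_cast; ring
      rw [hval, abs_sub_comm, abs_of_nonneg (by linarith)]
      linarith [hδ'ε]
  · -- δ > 0
    obtain ⟨C, hCm, hCb⟩ : ∃ C : ℕ, m ≤ C ∧ |t| + (m+1) * δ ≤ C * β := by
      refine ⟨⌈(|t| + (m+1) * δ) / β⌉₊ + m, by omega, ?_⟩
      have h1 : (|t| + (m+1) * δ) / β ≤ ((⌈(|t| + (m+1) * δ) / β⌉₊ + m : ℕ):ℝ) := by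
        push_cast
        linarith [Nat.le_ceil ((|t| + (m+1) * δ) / β), (Nat.cast_nonneg m : (0:ℝ) ≤ (m:ℝ))]
      calc |t| + (m+1) * δ = ((|t| + (m+1) * δ) / β) * β := by field_simp
        _ ≤ _ := mul_le_mul_of_nonneg_right h1 hβ.le
    have hTge : ((m:ℝ)+1) * δ ≤ t + C * β := by
      have h4 : -|t| ≤ t := neg_abs_le t
      linarith
    obtain ⟨N, hN1, hN2, hNm⟩ : ∃ N : ℕ, t + (C:ℝ) * β ≤ N * δ ∧
        (N:ℝ) * δ < (t + C * β) + δ ∧ m + 1 ≤ N := by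
      have hTpos : 0 ≤ (t + (C:ℝ) * β) / δ := by
        apply div_nonneg _ hpos.le
        calc (0:ℝ) ≤ ((m:ℝ)+1) * δ := by positivity
          _ ≤ _ := hTge
      refine ⟨⌈(t + (C:ℝ) * β) / δ⌉₊, ?_, ?_, ?_⟩
      · calc t + (C:ℝ) * β = ((t + (C:ℝ) * β) / δ) * δ := by field_simp
          _ ≤ _ := mul_le_mul_of_nonneg_right (Nat.le_ceil _) hpos.le
      · have h5 := Nat.ceil_lt_add_one hTpos
        have h6 : ((t + (C:ℝ) * β) / δ) * δ = t + (C:ℝ) * β := by field_simp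
        nlinarith
      · have h6 : ((m + 1 : ℕ) : ℝ) ≤ (t + (C:ℝ) * β) / δ := by
          push_cast
          rw [le_div_iff₀ hpos]
          exact hTge
        exact_mod_cast h6.trans (Nat.le_ceil _)
    refine ⟨N * a0, N * b0 + C, ?_, by omega, ?_⟩
    · have h := Nat.mul_le_mul_left N ha01
      rw [Nat.mul_one] at h; omega
    · have hval : ((N * a0 : ℕ) : ℝ) * α - ((N * b0 + C : ℕ) : ℝ) * β - t
          = N * δ - (t + (C:ℝ) * β) := by
        rw [hδdef]; push_cast; ring
      rw [hval, abs_of_nonneg (by linarith)]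
      linarith [(le_abs_self δ).trans_lt hδε]



lemma listProd_diagonal {n : ℕ} : ∀ {p : ℕ} (f : Fin p → Fin n → ℂ),
    (List.ofFn fun j => Matrix.diagonal (f j)).prod = Matrix.diagonal (fun i => ∏ j, f j i)
  | 0, f => by simp [List.ofFn_zero, Matrix.diagonal_one]
  | p + 1, f => by
    rw [List.ofFn_succ, List.prod_cons, listProd_diagonal (fun j => f j.succ),
      Matrix.diagonal_mul_diagonal]
    exact congrArg Matrix.diagonal
      (funext fun i => (Fin.prod_univ_succ (fun j : Fin (p+1) => f j i)).symm)

lemma key_prod {n p : ℕ} (dd : Fin p → Fin n → ℂ) (k : Fin p → ℕ) :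
    (List.ofFn fun j => Matrix.diagonal (dd j) ^ k j).prod
      = Matrix.diagonal (fun i => ∏ j, dd j i ^ k j) := by
  have h1 : (fun j : Fin p => Matrix.diagonal (dd j) ^ k j)
      = fun j => Matrix.diagonal (fun i => dd j i ^ k j) := by
    funext j
    rw [Matrix.diagonal_pow]
    rfl
  rw [h1, listProd_diagonal]

lemma prod_pow_single {q : ℕ} (x : Fin q → ℂ) (a : Fin q) (c : ℕ) :
    ∏ j, x j ^ (Pi.single a c j) = x a ^ c := by
  rw [Finset.prod_eq_single a]
  · rw [Pi.single_eq_same]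
  · intro j _ hj
    rw [Pi.single_eq_of_ne hj, pow_zero]
  · intro h
    exact absurd (Finset.mem_univ a) h


/-- Theorem 1.5: for every `n ≥ 2` there is an abelian semigroup generated by `n + 1`
invertible diagonal matrices which has no dense orbit, yet `J_G(e_k) = ℂⁿ` for every
canonical basis vector `e_k`. -/
theorem stmt18 (n : ℕ) (hn : 2 ≤ n) :
    ∃ A : Fin (n + 1) → Matrix (Fin n) (Fin n) ℂ,
      (∃ d : Fin (n + 1) → Fin n → ℂ, (∀ j i, d j i ≠ 0) ∧
        ∀ j, A j = Matrix.diagonal (d j)) ∧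
      (∀ i j, A i * A j = A j * A i) ∧
      (¬ ∃ v : Fin n → ℂ, Dense {w : Fin n → ℂ | ∃ B ∈ genSG A, w = B.mulVec v}) ∧
      ∀ k : Fin n, JSet A (Pi.single k 1) = Set.univ := by
  set θ : ℝ := 2 * Real.pi * Real.sqrt 2 with hθ
  set dd : Fin (n + 1) → Fin n → ℂ := fun j i =>
    if (j : ℕ) < n then
      (if (i : ℕ) = (j : ℕ) then ((Real.exp (-1) : ℝ) : ℂ) else ((Real.exp (Real.sqrt 2) : ℝ) : ℂ))
    else Complex.exp ((θ : ℝ) * Complex.I) with hdd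
  have hsqrt2 : (1 : ℝ) ≤ Real.sqrt 2 := by
    rw [show (1:ℝ) = Real.sqrt 1 from (Real.sqrt_one).symm]
    exact Real.sqrt_le_sqrt (by norm_num)
  -- |dd j i|
  have habs : ∀ (j : Fin (n + 1)) (i : Fin n), ‖dd j i‖ =
      if (j : ℕ) < n then (if (i : ℕ) = (j : ℕ) then Real.exp (-1) else Real.exp (Real.sqrt 2))
      else 1 := by
    intro j i
    simp only [hdd]
    split_ifs with h1 h2
    · rw [Complex.norm_real, Real.norm_eq_abs, abs_of_pos (Real.exp_pos _)]
    · rw [Complex.norm_real, Real.norm_eq_abs, abs_of_pos (Real.exp_pos _)]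
    · exact Complex.norm_exp_ofReal_mul_I θ
  have hprod_ge : ∀ j : Fin (n + 1), 1 ≤ ∏ i, ‖dd j i‖ := by
    intro j
    by_cases hj : (j : ℕ) < n
    · set a : Fin n := ⟨(j : ℕ), hj⟩ with ha
      have hsplit : ∏ i, ‖dd j i‖
          = ‖dd j a‖ * ∏ i ∈ Finset.univ.erase a, ‖dd j i‖ :=
        (Finset.mul_prod_erase Finset.univ _ (Finset.mem_univ a)).symm
      have h1 : ‖dd j a‖ = Real.exp (-1) := by rw [habs, if_pos hj, if_pos rfl]
      have h2 : ∀ i ∈ Finset.univ.erase a, ‖dd j i‖ = Real.exp (Real.sqrt 2) := by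
        intro i hi
        have hia : i ≠ a := Finset.ne_of_mem_erase hi
        rw [habs, if_pos hj, if_neg (fun h => hia (Fin.ext h))]
      rw [hsplit, h1, Finset.prod_congr rfl h2, Finset.prod_const,
        Finset.card_erase_of_mem (Finset.mem_univ a), Finset.card_univ, Fintype.card_fin,
        ← Real.exp_nat_mul, ← Real.exp_add]
      apply Real.one_le_exp
      have hn1 : (1 : ℝ) ≤ ((n - 1 : ℕ) : ℝ) := by
        have : 1 ≤ n - 1 := by omega
        exact_mod_cast this
      nlinarith [mul_le_mul hn1 hsqrt2 zero_le_one (by positivity : (0:ℝ) ≤ ((n-1:ℕ):ℝ))]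
    · have h2 : ∀ i, ‖dd j i‖ = 1 := fun i => by rw [habs, if_neg hj]
      simp [h2]
  refine ⟨fun j => Matrix.diagonal (dd j), ⟨dd, ?_, fun j => rfl⟩, ?_, ?_, ?_⟩
  · -- nonzero entries
    intro j i
    simp only [hdd]
    split_ifs
    · exact Complex.ofReal_ne_zero.mpr (Real.exp_ne_zero _)
    · exact Complex.ofReal_ne_zero.mpr (Real.exp_ne_zero _)
    · exact Complex.exp_ne_zero _
  · -- commute
    intro i j
    rw [Matrix.diagonal_mul_diagonal, Matrix.diagonal_mul_diagonal]
    exact congrArg Matrix.diagonal (funext fun x => mul_comm _ _)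
  · -- no dense orbit
    rintro ⟨v, hv⟩
    by_cases hz : ∃ i, v i = 0
    · obtain ⟨i, hi⟩ := hz
      have hU : IsOpen {w : Fin n → ℂ | w i ≠ 0} :=
        IsOpen.preimage (continuous_apply i) isOpen_compl_singleton
      obtain ⟨w, hwS, hwU⟩ := hv.exists_mem_open hU ⟨fun _ => 1, one_ne_zero⟩
      obtain ⟨B, ⟨kk, -, hB⟩, hw⟩ := hwS
      apply hwU
      rw [hw, hB, key_prod, Matrix.mulVec_diagonal, hi, mul_zero]
    · push_neg at hz
      have hc : 0 < ∏ i, ‖v i‖ :=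
        Finset.prod_pos fun i _ => norm_pos_iff.mpr (hz i)
      have hgcont : Continuous fun w : Fin n → ℂ => ∏ i, ‖w i‖ :=
        continuous_finset_prod _ fun i _ => continuous_norm.comp (continuous_apply i)
      have hU : IsOpen {w : Fin n → ℂ | ∏ i, ‖w i‖ < ∏ i, ‖v i‖} :=
        isOpen_lt hgcont continuous_const
      have h0 : (fun _ : Fin n => (0:ℂ)) ∈
          {w : Fin n → ℂ | ∏ i, ‖w i‖ < ∏ i, ‖v i‖} := by
        have h00 : ∏ i : Fin n, ‖(fun _ : Fin n => (0:ℂ)) i‖ = 0 :=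
          Finset.prod_eq_zero (Finset.mem_univ (⟨0, by omega⟩ : Fin n)) norm_zero
        rw [Set.mem_setOf_eq, h00]
        exact hc
      obtain ⟨w, hwS, hwU⟩ := hv.exists_mem_open hU ⟨_, h0⟩
      obtain ⟨B, ⟨kk, -, hB⟩, hw⟩ := hwS
      have hDle : 1 ≤ ∏ i, ‖∏ j, dd j i ^ kk j‖ := by
        have h1 : ∀ i : Fin n, ‖∏ j, dd j i ^ kk j‖
            = ∏ j, ‖dd j i‖ ^ kk j := by
          intro i
          rw [norm_prod]
          exact Finset.prod_congr rfl fun j _ => norm_pow _ _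
        calc (1:ℝ) = ∏ _j : Fin (n+1), (1:ℝ) := by simp
          _ ≤ ∏ j, (∏ i, ‖dd j i‖) ^ kk j :=
              Finset.prod_le_prod (fun j _ => zero_le_one)
                (fun j _ => one_le_pow₀ (hprod_ge j))
          _ = ∏ j, ∏ i, ‖dd j i‖ ^ kk j := by
              exact Finset.prod_congr rfl fun j _ => (Finset.prod_pow _ _ _).symm
          _ = ∏ i, ∏ j, ‖dd j i‖ ^ kk j := Finset.prod_comm
          _ = ∏ i, ‖∏ j, dd j i ^ kk j‖ := by
              exact Finset.prod_congr rfl fun i _ => (h1 i).symm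
      rw [hw, hB, key_prod] at hwU
      have hweq : ∏ i, ‖(Matrix.diagonal
            (fun i => ∏ j, dd j i ^ kk j)).mulVec v i‖
          = (∏ i, ‖∏ j, dd j i ^ kk j‖) * ∏ i, ‖v i‖ := by
        rw [← Finset.prod_mul_distrib]
        exact Finset.prod_congr rfl fun i _ => by rw [Matrix.mulVec_diagonal, norm_mul]
      rw [Set.mem_setOf_eq, hweq] at hwU
      nlinarith
  · -- J_G(e_k) = ℂ^n
    intro k
    refine Set.eq_univ_of_forall fun y => ?_
    have hdne : ∀ (j : Fin (n+1)) (i : Fin n), dd j i ≠ 0 := by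
      intro j i
      simp only [hdd]
      split_ifs
      · exact Complex.ofReal_ne_zero.mpr (Real.exp_ne_zero _)
      · exact Complex.ofReal_ne_zero.mpr (Real.exp_ne_zero _)
      · exact Complex.exp_ne_zero _
    set ck : Fin (n+1) := Fin.castSucc k with hck
    have hcklt : (ck : ℕ) < n := by rw [hck]; simpa using k.isLt
    have hckvk : (k : ℕ) = (ck : ℕ) := by rw [hck]; simp
    set j0 : Fin n := if (k : ℕ) = 0 then ⟨1, by omega⟩ else ⟨0, by omega⟩ with hj0
    have hj0k : j0 ≠ k := by
      rw [hj0]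
      split_ifs with h
      · intro hc; apply absurd (congrArg Fin.val hc); simp [h]
      · intro hc; apply h; rw [← congrArg Fin.val hc]
    set cj0 : Fin (n+1) := Fin.castSucc j0 with hcj0
    have hcj0lt : (cj0 : ℕ) < n := by rw [hcj0]; simpa using j0.isLt
    have hcj0v : (j0 : ℕ) = (cj0 : ℕ) := by rw [hcj0]; simp
    -- entry values
    have hlastv : ∀ i : Fin n, dd (Fin.last n) i = Complex.exp ((θ : ℝ) * Complex.I) := by
      intro i
      simp only [hdd]
      rw [if_neg (by simp)]
    have hckk : dd ck k = ((Real.exp (-1) : ℝ) : ℂ) := by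
      simp only [hdd]
      rw [if_pos hcklt, if_pos hckvk]
    have hcki : ∀ i : Fin n, i ≠ k → dd ck i = ((Real.exp (Real.sqrt 2) : ℝ) : ℂ) := by
      intro i hik
      simp only [hdd]
      rw [if_pos hcklt, if_neg (fun h => hik (Fin.ext (h.trans hckvk.symm)))]
    have hcj0k : dd cj0 k = ((Real.exp (Real.sqrt 2) : ℝ) : ℂ) := by
      simp only [hdd]
      rw [if_pos hcj0lt, if_neg (fun h => hj0k (Fin.ext (hcj0v.trans h.symm)))]
    have hcj0ge : ∀ i : Fin n, Real.exp (-1) ≤ ‖dd cj0 i‖ := by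
      intro i
      rw [habs, if_pos hcj0lt]
      split_ifs
      · exact le_refl _
      · exact Real.exp_le_exp.mpr (by nlinarith [hsqrt2])
    suffices h : ∃ K : ℕ → Fin (n+1) → ℕ,
        (∀ m, m ≤ ∑ j, K m j) ∧
        Tendsto (fun m => ∏ j, dd j k ^ K m j) atTop (𝓝 (y k)) ∧
        (∀ i : Fin n, i ≠ k →
          Tendsto (fun m => ‖∏ j, dd j i ^ K m j‖) atTop atTop) by
      obtain ⟨K, hsum, hkk, hinf⟩ := h
      have hDne : ∀ m i, (∏ j, dd j i ^ K m j) ≠ 0 := fun m i =>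
        Finset.prod_ne_zero_iff.mpr fun j _ => pow_ne_zero _ (hdne j i)
      refine ⟨fun m i => if i = k then 1 else y i / (∏ j, dd j i ^ K m j), K,
        tendsto_atTop_mono hsum tendsto_id, ?_, ?_⟩
      · rw [tendsto_pi_nhds]
        intro i
        by_cases hik : i = k
        · subst hik
          simp only [eq_self_iff_true, if_true, Pi.single_eq_same]
          exact tendsto_const_nhds
        · simp only [if_neg hik, Pi.single_eq_of_ne hik]
          rw [tendsto_zero_iff_norm_tendsto_zero]
          simp only [norm_div]
          exact Tendsto.const_div_atTop (hinf i hik) _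
      · rw [tendsto_pi_nhds]
        intro i
        have hmv : ∀ m, ((List.ofFn fun j =>
              (fun j' => Matrix.diagonal (dd j')) j ^ K m j).prod).mulVec
              (fun i' => if i' = k then 1 else y i' / (∏ j, dd j i' ^ K m j)) i
            = (∏ j, dd j i ^ K m j) * (if i = k then 1 else y i / (∏ j, dd j i ^ K m j)) := by
          intro m
          rw [key_prod, Matrix.mulVec_diagonal]
        simp only [hmv]
        by_cases hik : i = k
        · subst hik
          simp only [eq_self_iff_true, if_true, mul_one]
          exact hkk
        · simp only [if_neg hik]
          have hcancel : ∀ m, (∏ j, dd j i ^ K m j) * (y i / (∏ j, dd j i ^ K m j)) = y i := by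
            intro m
            rw [mul_comm]
            exact div_mul_cancel₀ _ (hDne m i)
          simp only [hcancel]
          exact tendsto_const_nhds
    -- construct the exponents
    by_cases hyk : y k = 0
    · -- simple choice: K m = Pi.single ck m
      refine ⟨fun m => Pi.single ck m, ?_, ?_, ?_⟩
      · intro m
        rw [Fintype.sum_pi_single']
      · have hDk : ∀ m : ℕ, ∏ j, dd j k ^ (Pi.single ck m : Fin (n+1) → ℕ) j
            = ((Real.exp (-1) ^ m : ℝ) : ℂ) := by
          intro m
          rw [prod_pow_single, hckk, Complex.ofReal_pow]
        simp only [hDk, hyk]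
        have h1 : Tendsto (fun m : ℕ => Real.exp (-1) ^ m) atTop (𝓝 0) :=
          tendsto_pow_atTop_nhds_zero_of_lt_one (Real.exp_pos _).le
            (Real.exp_lt_one_iff.mpr (by norm_num))
        have h2 := (Complex.continuous_ofReal.tendsto 0).comp h1
        rw [Complex.ofReal_zero] at h2
        exact h2
      · intro i hik
        have hDi : ∀ m : ℕ, ‖∏ j, dd j i ^ (Pi.single ck m : Fin (n+1) → ℕ) j‖
            = Real.exp (Real.sqrt 2) ^ m := by
          intro m
          rw [prod_pow_single, hcki i hik, norm_pow, Complex.norm_real, Real.norm_eq_abs,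
            abs_of_pos (Real.exp_pos _)]
        simp only [hDi]
        exact tendsto_pow_atTop_atTop_of_one_lt
          (Real.one_lt_exp_iff.mpr (by positivity))
    · -- general target
      set t : ℝ := Real.log (‖y k‖) with ht
      set φ : ℝ := Complex.arg (y k) with hφ
      have habsyk : 0 < ‖y k‖ := norm_pos_iff.mpr hyk
      have hθpos : 0 < θ := by rw [hθ]; positivity
      have hsq2pos : (0:ℝ) < Real.sqrt 2 := by positivity
      have hlog := fun m : ℕ => dense_aux (Real.sqrt 2) 1 hsq2pos one_pos
        (by rw [div_one]; exact irrational_sqrt_two) t (1/(m+1)) (by positivity) m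
      choose s r hs hr hsr using hlog
      have hargirr : Irrational (θ / (2 * Real.pi)) := by
        have h2pi : (2 * Real.pi) ≠ 0 := by positivity
        have hq2 : θ / (2 * Real.pi) = Real.sqrt 2 := by
          rw [hθ, mul_comm, mul_div_assoc, div_self h2pi, mul_one]
        rw [hq2]
        exact irrational_sqrt_two
      have harg := fun m : ℕ => dense_aux θ (2 * Real.pi) hθpos
        (by positivity) hargirr φ (1/(m+1)) (by positivity) m
      choose p q hp hq hpq using harg
      refine ⟨fun m => Pi.single (Fin.last n) (p m) +
        (Pi.single ck (r m) + Pi.single cj0 (s m)), ?_, ?_, ?_⟩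
      · intro m
        have hlc : ck ≠ Fin.last n := by
          intro h
          have h2 := congrArg Fin.val h
          rw [Fin.val_last, ← hckvk] at h2
          omega
        have hccj : ck ≠ cj0 := by
          intro h
          exact hj0k (Fin.castSucc_inj.mp (hck ▸ hcj0 ▸ h)).symm
        have hKc : (Pi.single (Fin.last n) (p m) +
            (Pi.single ck (r m) + Pi.single cj0 (s m)) : Fin (n+1) → ℕ) ck = r m := by
          rw [Pi.add_apply, Pi.add_apply, Pi.single_eq_same,
            Pi.single_eq_of_ne hlc, Pi.single_eq_of_ne hccj]
          omega
        calc m ≤ r m := hr m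
          _ = _ := hKc.symm
          _ ≤ _ := Finset.single_le_sum (f := (Pi.single (Fin.last n) (p m) +
              (Pi.single ck (r m) + Pi.single cj0 (s m)) : Fin (n+1) → ℕ))
              (fun j _ => Nat.zero_le _) (Finset.mem_univ ck)
      · -- coordinate k converges to y k
        have hD : ∀ (m : ℕ) (i : Fin n),
            (∏ j, dd j i ^ (Pi.single (Fin.last n) (p m) +
              (Pi.single ck (r m) + Pi.single cj0 (s m)) : Fin (n+1) → ℕ) j)
            = dd (Fin.last n) i ^ p m * (dd ck i ^ r m * dd cj0 i ^ s m) := by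
          intro m i
          have hsplit : ∀ j : Fin (n+1), dd j i ^ (Pi.single (Fin.last n) (p m) +
              (Pi.single ck (r m) + Pi.single cj0 (s m)) : Fin (n+1) → ℕ) j
              = dd j i ^ (Pi.single (Fin.last n) (p m) : Fin (n+1) → ℕ) j *
                (dd j i ^ (Pi.single ck (r m) : Fin (n+1) → ℕ) j *
                 dd j i ^ (Pi.single cj0 (s m) : Fin (n+1) → ℕ) j) := by
            intro j
            simp only [Pi.add_apply, pow_add]
          rw [Finset.prod_congr rfl (fun j _ => hsplit j), Finset.prod_mul_distrib,
            Finset.prod_mul_distrib, prod_pow_single, prod_pow_single, prod_pow_single]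
        have hv0 : Tendsto (fun m => (s m : ℝ) * Real.sqrt 2 - (r m : ℝ) * 1 - t)
            atTop (𝓝 0) := by
          apply squeeze_zero_norm (fun m => ((hsr m).le : _))
          exact tendsto_one_div_add_atTop_nhds_zero_nat
        have hu0 : Tendsto (fun m => (p m : ℝ) * θ - (q m : ℝ) * (2 * Real.pi) - φ)
            atTop (𝓝 0) := by
          apply squeeze_zero_norm (fun m => ((hpq m).le : _))
          exact tendsto_one_div_add_atTop_nhds_zero_nat
        have hre : Tendsto (fun m => (s m : ℝ) * Real.sqrt 2 - (r m : ℝ)) atTop (𝓝 t) := by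
          have h := hv0.const_add t
          have h2 : (fun m => t + ((s m : ℝ) * Real.sqrt 2 - (r m : ℝ) * 1 - t))
              = fun m => (s m : ℝ) * Real.sqrt 2 - (r m : ℝ) := by
            funext m; ring
          rw [h2, add_zero] at h
          exact h
        have him : Tendsto (fun m => (p m : ℝ) * θ - (q m : ℝ) * (2 * Real.pi))
            atTop (𝓝 φ) := by
          have h := hu0.const_add φ
          have h2 : (fun m => φ + ((p m : ℝ) * θ - (q m : ℝ) * (2 * Real.pi) - φ))
              = fun m => (p m : ℝ) * θ - (q m : ℝ) * (2 * Real.pi) := by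
            funext m; ring
          rw [h2, add_zero] at h
          exact h
        have hz : Tendsto (fun m => ((((s m : ℝ) * Real.sqrt 2 - (r m : ℝ) : ℝ)) : ℂ)
              + ((((p m : ℝ) * θ - (q m : ℝ) * (2 * Real.pi) : ℝ)) : ℂ) * Complex.I)
            atTop (𝓝 ((t : ℂ) + (φ : ℂ) * Complex.I)) :=
          Tendsto.add ((Complex.continuous_ofReal.tendsto t).comp hre)
            (Tendsto.mul_const Complex.I ((Complex.continuous_ofReal.tendsto φ).comp him))
        have hexp := (Complex.continuous_exp.tendsto _).comp hz
        have hlimval : Complex.exp ((t : ℂ) + (φ : ℂ) * Complex.I) = y k := by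
          rw [Complex.exp_add, ← Complex.ofReal_exp, ht, Real.exp_log habsyk, hφ]
          exact Complex.norm_mul_exp_arg_mul_I (y k)
        rw [hlimval] at hexp
        apply hexp.congr
        intro m
        show Complex.exp _ = _
        rw [hD m k, hlastv, hckk, hcj0k]
        rw [← Complex.exp_nat_mul, Complex.ofReal_exp, Complex.ofReal_exp,
          ← Complex.exp_nat_mul, ← Complex.exp_nat_mul, ← Complex.exp_add,
          ← Complex.exp_add]
        calc Complex.exp (((((s m : ℝ) * Real.sqrt 2 - (r m : ℝ) : ℝ)) : ℂ)
              + ((((p m : ℝ) * θ - (q m : ℝ) * (2 * Real.pi) : ℝ)) : ℂ) * Complex.I)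
            = Complex.exp (((((s m : ℝ) * Real.sqrt 2 - (r m : ℝ) : ℝ)) : ℂ)
              + ((((p m : ℝ) * θ - (q m : ℝ) * (2 * Real.pi) : ℝ)) : ℂ) * Complex.I) *
              Complex.exp (((q m : ℤ) : ℂ) * (2 * (Real.pi : ℂ) * Complex.I)) := by
              rw [Complex.exp_int_mul_two_pi_mul_I, mul_one]
          _ = Complex.exp ((((((s m : ℝ) * Real.sqrt 2 - (r m : ℝ) : ℝ)) : ℂ)
              + ((((p m : ℝ) * θ - (q m : ℝ) * (2 * Real.pi) : ℝ)) : ℂ) * Complex.I)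
              + ((q m : ℤ) : ℂ) * (2 * (Real.pi : ℂ) * Complex.I)) :=
              (Complex.exp_add _ _).symm
          _ = Complex.exp ((p m : ℂ) * (((θ : ℝ) : ℂ) * Complex.I)
              + ((r m : ℂ) * (((-1 : ℝ)) : ℂ) + (s m : ℂ) * (((Real.sqrt 2 : ℝ)) : ℂ))) := by
              apply congrArg Complex.exp
              push_cast
              ring
      · -- other coordinates blow up
        intro i hik
        have hD : ∀ (m : ℕ),
            ‖∏ j, dd j i ^ (Pi.single (Fin.last n) (p m) +
              (Pi.single ck (r m) + Pi.single cj0 (s m)) : Fin (n+1) → ℕ) j‖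
            = ‖dd (Fin.last n) i‖ ^ p m *
              (‖dd ck i‖ ^ r m * ‖dd cj0 i‖ ^ s m) := by
          intro m
          have hsplit : ∀ j : Fin (n+1), dd j i ^ (Pi.single (Fin.last n) (p m) +
              (Pi.single ck (r m) + Pi.single cj0 (s m)) : Fin (n+1) → ℕ) j
              = dd j i ^ (Pi.single (Fin.last n) (p m) : Fin (n+1) → ℕ) j *
                (dd j i ^ (Pi.single ck (r m) : Fin (n+1) → ℕ) j *
                 dd j i ^ (Pi.single cj0 (s m) : Fin (n+1) → ℕ) j) := by
            intro j
            simp only [Pi.add_apply, pow_add]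
          rw [Finset.prod_congr rfl (fun j _ => hsplit j), Finset.prod_mul_distrib,
            Finset.prod_mul_distrib, prod_pow_single, prod_pow_single, prod_pow_single,
            norm_mul, norm_mul, norm_pow, norm_pow, norm_pow]
        have hge : ∀ m : ℕ, Real.exp (((m : ℝ) - t - 1) / Real.sqrt 2) ≤
            ‖dd (Fin.last n) i‖ ^ p m *
              (‖dd ck i‖ ^ r m * ‖dd cj0 i‖ ^ s m) := by
          intro m
          have ha1 : ‖dd (Fin.last n) i‖ = 1 := by
            rw [hlastv]; exact Complex.norm_exp_ofReal_mul_I θ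
          have ha2 : ‖dd ck i‖ = Real.exp (Real.sqrt 2) := by
            rw [hcki i hik, Complex.norm_real, Real.norm_eq_abs, abs_of_pos (Real.exp_pos _)]
          rw [ha1, ha2, one_pow, one_mul]
          have hstep1 : Real.exp (Real.sqrt 2 * r m - s m)
              ≤ Real.exp (Real.sqrt 2) ^ r m * ‖dd cj0 i‖ ^ s m := by
            have h1 : Real.exp (Real.sqrt 2 * r m - s m)
                = Real.exp (Real.sqrt 2) ^ r m * Real.exp (-1) ^ s m := by
              rw [← Real.exp_nat_mul, ← Real.exp_nat_mul, ← Real.exp_add]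
              congr 1
              ring
            rw [h1]
            apply mul_le_mul_of_nonneg_left _ (by positivity)
            exact pow_le_pow_left₀ (Real.exp_pos _).le (hcj0ge i) _
          refine le_trans ?_ hstep1
          apply Real.exp_le_exp.mpr
          have h2 : Real.sqrt 2 * Real.sqrt 2 = 2 := Real.mul_self_sqrt (by norm_num)
          have hb : s m * Real.sqrt 2 - r m * 1 - t < 1 := by
            have := (abs_lt.mp (hsr m)).2
            have h1m : (1 : ℝ)/(m+1) ≤ 1 := by
              rw [div_le_one (by positivity)]
              linarith [Nat.cast_nonneg (α := ℝ) m]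
            linarith
          have hrm : (m : ℝ) ≤ r m := by exact_mod_cast hr m
          rw [div_le_iff₀ hsq2pos]
          nlinarith
        simp only [hD]
        apply tendsto_atTop_mono hge
        apply Real.tendsto_exp_atTop.comp
        apply Tendsto.atTop_div_const hsq2pos
        apply tendsto_atTop_add_const_right
        apply tendsto_atTop_add_const_right
        exact tendsto_natCast_atTop_atTop
end
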